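/- Let {C_i, C_j, C_k} be a critical triplet, let C be a maximal element of S([n]) with C > F_ijk, and let A ∈ S([n]) with A ⋗ F_ijk. Then C covers A in S([n]) if and only if the edge e(C) is incident to the vertex v(A) in T(F_ijk). -/

import Mathlib

/-
Common combinatorial set-up: `X`-forests, the Tuffley poset `S(X)` (forests up to
isomorphism, ordered by sequences of edge contractions and safe edge deletions),
nearest neighbor interchanges, NNI-tree space `G_NNI`, critical triplets, and
recursive coatom orderings.
-/

attribute [local instance] Classical.propDecidable

/-- A finite labelled graph datum: a finite vertex set (of naturals), a finite set of
undirected edges, and a labelling map from `X` to the vertices. -/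
structure PreForest (X : Type) where
  verts : Finset ℕ
  edges : Finset (Sym2 ℕ)
  labelOf : X → ℕ

namespace PreForest

variable {X : Type}

/-- The underlying simple graph of a `PreForest`. -/
def toGraph (F : PreForest X) : SimpleGraph ℕ where
  Adj u v := u ≠ v ∧ s(u, v) ∈ F.edges
  symm := by
    constructor
    intro u v h
    exact ⟨h.1.symm, by rw [Sym2.eq_swap]; exact h.2⟩
  loopless := by
    constructor
    intro u h
    exact h.1 rfl

/-- The degree of a vertex: the number of edges containing it. -/
noncomputable def degree (F : PreForest X) (v : ℕ) : ℕ :=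
  (F.edges.filter fun e => v ∈ e).card

/-- A vertex is labeled when it is in the image of the labelling map. -/
def IsLabeled (F : PreForest X) (v : ℕ) : Prop :=
  ∃ x, F.labelOf x = v

/-- A leaf is a vertex of degree one. -/
def IsLeaf (F : PreForest X) (v : ℕ) : Prop :=
  F.degree v = 1

/-- A leaf edge is an edge incident to a leaf. -/
def IsLeafEdge (F : PreForest X) (e : Sym2 ℕ) : Prop :=
  e ∈ F.edges ∧ ∃ v ∈ e, F.IsLeaf v

/-- An internal edge is an edge that is not a leaf edge. -/
def IsInternalEdge (F : PreForest X) (e : Sym2 ℕ) : Prop :=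
  e ∈ F.edges ∧ ∀ v ∈ e, ¬ F.IsLeaf v

/-- `F` is an `X`-forest: edges are non-loops between vertices, labels are vertices,
the graph is acyclic, every connected component of the vertex set contains a labeled
vertex (so the trees of the forest are `A`-trees for the blocks `A` of a set partition
of `X`), and every unlabeled vertex has degree greater than `2`. -/
structure IsXForest (F : PreForest X) : Prop where
  edge_ok : ∀ e ∈ F.edges, ¬ e.IsDiag ∧ ∀ v ∈ e, v ∈ F.verts
  label_mem : ∀ x, F.labelOf x ∈ F.verts
  acyclic : F.toGraph.IsAcyclic
  comp_labeled : ∀ v ∈ F.verts, ∃ x, F.toGraph.Reachable (F.labelOf x) v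
  unlabeled_deg : ∀ v ∈ F.verts, ¬ F.IsLabeled v → 2 < F.degree v

/-- Contraction of the edge `s(u, v)`: remove the edge and identify `v` with `u`. -/
noncomputable def contractEdge (F : PreForest X) (u v : ℕ) : PreForest X where
  verts := F.verts.erase v
  edges := (F.edges.image (Sym2.map fun w => if w = v then u else w)).filter
    fun e => ¬ e.IsDiag
  labelOf := fun x => if F.labelOf x = v then u else F.labelOf x

/-- Deletion of an edge. -/
def deleteEdge (F : PreForest X) (e : Sym2 ℕ) : PreForest X :=
  { F with edges := F.edges.erase e }

/-- Adding an edge. -/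
def addEdge (F : PreForest X) (e : Sym2 ℕ) : PreForest X :=
  { F with edges := insert e F.edges }

/-- Subdivide the edge `s(a, b)` by a new vertex `m` and attach the vertex `ℓ`
to `m` by a new edge. -/
noncomputable def subdivideAttach (F : PreForest X) (a b m ℓ : ℕ) : PreForest X where
  verts := insert m F.verts
  edges := insert s(ℓ, m) (insert s(a, m) (insert s(b, m) (F.edges.erase s(a, b))))
  labelOf := F.labelOf

/-- An edge may be safely deleted when each of its endpoints is either labeled or has
degree greater than `3`. -/
def SafeToDelete (F : PreForest X) (e : Sym2 ℕ) : Prop :=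
  e ∈ F.edges ∧ ∀ v ∈ e, F.IsLabeled v ∨ 3 < F.degree v

/-- One step in the Tuffley order: a single edge contraction or safe edge deletion. -/
inductive Step (F : PreForest X) : PreForest X → Prop
  | contract (u v : ℕ) (hmem : s(u, v) ∈ F.edges) (hne : u ≠ v) :
      Step F (F.contractEdge u v)
  | delete (e : Sym2 ℕ) (h : F.SafeToDelete e) :
      Step F (F.deleteEdge e)

/-- Isomorphism of labelled forests. -/
def IsIso (F G : PreForest X) : Prop :=
  ∃ f : ℕ → ℕ, Set.InjOn f ↑F.verts ∧ F.verts.image f = G.verts ∧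
    F.edges.image (Sym2.map f) = G.edges ∧ ∀ x, G.labelOf x = f (F.labelOf x)

end PreForest

/-- An `X`-forest. -/
def XForest (X : Type) : Type :=
  { F : PreForest X // F.IsXForest }

/-- Isomorphism of `X`-forests. -/
def xfIso {X : Type} (F G : XForest X) : Prop :=
  PreForest.IsIso F.1 G.1

/-- `X`-forests up to isomorphism. -/
def tuffleySetoid (X : Type) : Setoid (XForest X) :=
  Relation.EqvGen.setoid xfIso

/-- The underlying set of the Tuffley poset `S(X)`: `X`-forests up to isomorphism. -/
def Tuffley (X : Type) : Type :=
  Quotient (tuffleySetoid X)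

/-- The isomorphism class of an `X`-forest. -/
def mkT {X : Type} (F : XForest X) : Tuffley X :=
  Quotient.mk (tuffleySetoid X) F

/-- `F` is obtainable from `G` (up to isomorphism) by a sequence of edge contractions
and safe edge deletions. -/
def preLe {X : Type} (F G : PreForest X) : Prop :=
  ∃ H : PreForest X, Relation.ReflTransGen PreForest.Step G H ∧ PreForest.IsIso H F

/-- The Tuffley order on `S(X)`. -/
def tle {X : Type} (a b : Tuffley X) : Prop :=
  ∃ F G : XForest X, mkT F = a ∧ mkT G = b ∧ preLe F.1 G.1

/-- The strict Tuffley order. -/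
def tlt {X : Type} (a b : Tuffley X) : Prop :=
  tle a b ∧ ¬ tle b a

/-- `tCovBy a b` means `b` covers `a` (written `a ⋖ b`) in the Tuffley poset. -/
def tCovBy {X : Type} (a b : Tuffley X) : Prop :=
  tlt a b ∧ ∀ c, tlt a c → tlt c b → False

/-- Maximal elements of the Tuffley poset; the set of all of them is `C_X`. -/
def IsMaxT {X : Type} (a : Tuffley X) : Prop :=
  ∀ b, ¬ tlt a b

/-- `G` is obtained from `F` by the nearest neighbor interchange over the edge
`s(u, v)` that swaps the subtree hanging at `b` (a neighbor of `u`) with the subtree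
hanging at `c` (a neighbor of `v`). -/
def NNISwap {X : Type} (F G : PreForest X) (u v b c : ℕ) : Prop :=
  u ≠ v ∧ b ≠ u ∧ b ≠ v ∧ c ≠ u ∧ c ≠ v ∧ b ≠ c ∧
    s(u, v) ∈ F.edges ∧ s(u, b) ∈ F.edges ∧ s(v, c) ∈ F.edges ∧
    G.verts = F.verts ∧ G.labelOf = F.labelOf ∧
    G.edges = insert s(u, c) (insert s(v, b) ((F.edges.erase s(u, b)).erase s(v, c)))

/-- `b` is obtained from `a` by a single NNI over the internal edge `s(u, v)`. -/
def nniOver {X : Type} (a b : Tuffley X) (u v : ℕ) : Prop :=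
  ∃ (C C' : XForest X) (d e : ℕ), mkT C = a ∧ mkT C' = b ∧
    C.1.IsInternalEdge s(u, v) ∧ NNISwap C.1 C'.1 u v d e

/-- `b` is obtained from `a` by a single NNI. -/
def nniRel {X : Type} (a b : Tuffley X) : Prop :=
  ∃ u v, nniOver a b u v

/-- Adjacency in NNI-tree space: two maximal elements of the Tuffley poset are
adjacent when one is obtained from the other by a single NNI. -/
def nniAdj {X : Type} (a b : Tuffley X) : Prop :=
  IsMaxT a ∧ IsMaxT b ∧ a ≠ b ∧ (nniRel a b ∨ nniRel b a)

/-- NNI-tree space `G_NNI` as a graph on the (classes of) maximal elements `C_X`. -/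
def GNNI (X : Type) : SimpleGraph (Tuffley X) where
  Adj := nniAdj
  symm := by
    constructor
    intro a b h
    exact ⟨h.2.1, h.1, h.2.2.1.symm, h.2.2.2.symm⟩
  loopless := by
    constructor
    intro a h
    exact h.2.2.1 rfl

/-- A critical triplet `{C_i, C_j, C_k}` of maximal elements of the Tuffley poset,
together with the associated elements `F_j`, `F_k` and `F_ijk`.  The forest `R` is a
representative of `C_i`; it has a leaf `leafv` labeled `x` whose leaf edge
`s(leafv, midv)` is adjacent to the two internal edges `s(midv, w1)` and
`s(midv, w2)`; `F_j` (respectively `F_k`) is obtained by contracting `s(midv, w1)`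
(resp. `s(midv, w2)`) and is covered by both `C_i` and `C_j` (resp. `C_i` and `C_k`);
`F_ijk` is obtained by furthermore deleting the leaf edge. -/
structure CriticalTriplet (X : Type) where
  Ci : Tuffley X
  Cj : Tuffley X
  Ck : Tuffley X
  Fj : Tuffley X
  Fk : Tuffley X
  Fijk : Tuffley X
  maxi : IsMaxT Ci
  maxj : IsMaxT Cj
  maxk : IsMaxT Ck
  ne_ij : Ci ≠ Cj
  ne_ik : Ci ≠ Ck
  ne_jk : Cj ≠ Ck
  R : XForest X
  hR : mkT R = Ci
  x : X
  leafv : ℕ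
  midv : ℕ
  w1 : ℕ
  w2 : ℕ
  h_label : R.1.labelOf x = leafv
  h_leaf : R.1.IsLeaf leafv
  h_ex : s(leafv, midv) ∈ R.1.edges
  h_int1 : R.1.IsInternalEdge s(midv, w1)
  h_int2 : R.1.IsInternalEdge s(midv, w2)
  h_w_ne : w1 ≠ w2
  h_w1_ne : w1 ≠ leafv
  h_w2_ne : w2 ≠ leafv
  FjR : XForest X
  hFjR : mkT FjR = Fj
  hFjdef : FjR.1 = R.1.contractEdge midv w1
  FkR : XForest X
  hFkR : mkT FkR = Fk
  hFkdef : FkR.1 = R.1.contractEdge midv w2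
  cov_j_i : tCovBy Fj Ci
  cov_j_j : tCovBy Fj Cj
  cov_k_i : tCovBy Fk Ci
  cov_k_k : tCovBy Fk Ck
  FijkR : XForest X
  hFijkR : mkT FijkR = Fijk
  hFijkdef : FijkR.1 = FjR.1.deleteEdge s(leafv, midv)

namespace CriticalTriplet

variable {X : Type} (T : CriticalTriplet X)

/-- The vertex set of the tree `T(F_ijk)`: the vertices of `F_ijk` other than the
isolated vertex labeled `x`. -/
def treeVerts : Finset ℕ :=
  T.FijkR.1.verts.erase T.leafv

/-- The edge set of the tree `T(F_ijk)`. -/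
def treeEdges : Finset (Sym2 ℕ) :=
  T.FijkR.1.edges

/-- The element `A` of `S([n])` (covering `F_ijk`) is obtained from `F_ijk` by adding
an edge between the isolated vertex labeled `x` and the vertex `w` of `T(F_ijk)`;
when such `w` is unique it is the vertex `v(A)`. -/
def AttachedAt (A : Tuffley X) (w : ℕ) : Prop :=
  w ∈ T.treeVerts ∧ ∃ Ar : XForest X, mkT Ar = A ∧
    Ar.1 = T.FijkR.1.addEdge s(T.leafv, w)

/-- The maximal element `C` (lying above `F_ijk`) is obtained from `F_ijk` by
subdividing the edge `s(a, b)` of `T(F_ijk)` with a new vertex and joining that new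
vertex to the isolated vertex labeled `x`; when the subdivided edge is unique it is
the edge `e(C)`. -/
def SubdividesAt (C : Tuffley X) (a b : ℕ) : Prop :=
  s(a, b) ∈ T.treeEdges ∧ ∃ (m : ℕ) (Cr : XForest X), m ∉ T.FijkR.1.verts ∧
    mkT Cr = C ∧ Cr.1 = T.FijkR.1.subdivideAttach a b m T.leafv

end CriticalTriplet

/-- `covR lt a b`: `b` covers `a` with respect to the strict order `lt`. -/
def covR {α : Type} (lt : α → α → Prop) (a b : α) : Prop :=
  lt a b ∧ ∀ c, lt a c → lt c b → False

/-- `IsRCO lt m L`: `L` is a recursive coatom ordering of the interval `[⊥, m]`,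
i.e. `L` is an ordering of the coatoms of `[⊥, m]` (the elements covered by `m`) such
that (i) each `[⊥, L j]` admits a recursive coatom ordering in which, for `j ≠ 0`,
the coatoms covered by some earlier `L k` (`k < j`) come first, and (ii) for all
`i < j` and `y` below both `L i` and `L j` there are `k < j` and `z` with
`z ⋖ L k`, `z ⋖ L j` and `y < z`. -/
inductive IsRCO {α : Type} (lt : α → α → Prop) : α → List α → Prop
  | mk (m : α) (L : List α)
      (hnodup : L.Nodup)
      (hmem : ∀ c, c ∈ L ↔ covR lt c m)
      (subord : Fin L.length → List α)
      (hrec : ∀ j : Fin L.length, IsRCO lt (L.get j) (subord j))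
      (hfirst : ∀ j : Fin L.length, (j : ℕ) ≠ 0 →
        ∃ p : ℕ, ∀ idx : Fin (subord j).length,
          ((idx : ℕ) < p ↔
            ∃ k : Fin L.length, (k : ℕ) < (j : ℕ) ∧
              covR lt ((subord j).get idx) (L.get k)))
      (hii : ∀ i j : Fin L.length, (i : ℕ) < (j : ℕ) →
        ∀ y, lt y (L.get i) → lt y (L.get j) →
          ∃ k : Fin L.length, (k : ℕ) < (j : ℕ) ∧
            ∃ z, covR lt z (L.get k) ∧ covR lt z (L.get j) ∧ lt y z) :
      IsRCO lt m L

/-- The augmented Tuffley poset `Ŝ([n]) = S([n]) ∪ {0̂, 1̂}`: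
`none` is `0̂`, `some none` is `1̂`, and `some (some F)` is `F ∈ S([n])`. -/
def Shat (n : ℕ) : Type :=
  Option (Option (Tuffley (Fin n)))

/-- The top element `1̂` of `Ŝ([n])`. -/
def hatTop (n : ℕ) : Shat n :=
  some none

/-- The order on `Ŝ([n])`. -/
def hatLe {n : ℕ} : Shat n → Shat n → Prop
  | none, _ => True
  | some none, some none => True
  | some none, _ => False
  | some (some _), none => False
  | some (some _), some none => True
  | some (some F), some (some G) => tle F G

/-- The strict order on `Ŝ([n])`. -/
def hatLt {n : ℕ} (a b : Shat n) : Prop :=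
  hatLe a b ∧ ¬ hatLe b a

namespace PreForest

variable {X : Type}

/-- Edges are non-diagonal with endpoints in `verts`, and labels land in `verts`. -/
def Good (F : PreForest X) : Prop :=
  (∀ e ∈ F.edges, ¬ e.IsDiag ∧ ∀ v ∈ e, v ∈ F.verts) ∧ ∀ x, F.labelOf x ∈ F.verts

lemma IsXForest.good {F : PreForest X} (h : F.IsXForest) : F.Good :=
  ⟨h.edge_ok, h.label_mem⟩

lemma sym2_map_injOn {f : ℕ → ℕ} {V : Finset ℕ} (hinj : Set.InjOn f ↑V) (E : Finset (Sym2 ℕ))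
    (hE : ∀ e ∈ E, ∀ v ∈ e, v ∈ V) : Set.InjOn (Sym2.map f) ↑E := by
  intro e1 h1 e2 h2 h
  induction e1 using Sym2.inductionOn with | _ x y =>
  induction e2 using Sym2.inductionOn with | _ z w =>
  simp only [Finset.mem_coe] at h1 h2
  have hx := hE _ h1 x (by simp)
  have hy := hE _ h1 y (by simp)
  have hz := hE _ h2 z (by simp)
  have hw := hE _ h2 w (by simp)
  rw [Sym2.map_pair_eq, Sym2.map_pair_eq, Sym2.eq_iff] at h
  rw [Sym2.eq_iff]
  rcases h with ⟨h1', h2'⟩ | ⟨h1', h2'⟩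
  · exact Or.inl ⟨hinj hx hz h1', hinj hy hw h2'⟩
  · exact Or.inr ⟨hinj hx hw h1', hinj hy hz h2'⟩

lemma iso_refl (F : PreForest X) : IsIso F F := by
  refine ⟨id, Set.injOn_id _, Finset.image_id, ?_, fun x => rfl⟩
  rw [Sym2.map_id, Finset.image_id]

lemma iso_of_eq {F G : PreForest X} (h : F = G) : IsIso F G := h ▸ iso_refl F

lemma iso_trans {F G H : PreForest X} (h1 : IsIso F G) (h2 : IsIso G H) : IsIso F H := by
  obtain ⟨f, finj, fv, fe, fl⟩ := h1
  obtain ⟨g, ginj, gv, ge, gl⟩ := h2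
  refine ⟨g ∘ f, ?_, ?_, ?_, ?_⟩
  · intro a ha b hb h
    have hfa : f a ∈ G.verts := fv ▸ Finset.mem_image_of_mem f ha
    have hfb : f b ∈ G.verts := fv ▸ Finset.mem_image_of_mem f hb
    exact finj ha hb (ginj hfa hfb h)
  · rw [← Finset.image_image, fv, gv]
  · rw [← ge, ← fe, Finset.image_image]
    apply Finset.image_congr
    intro e _
    exact (Sym2.map_map e).symm
  · intro x
    rw [gl, fl]
    rfl

lemma iso_symm {F G : PreForest X} (hF : F.Good) (h : IsIso F G) : IsIso G F := by
  obtain ⟨f, finj, fv, fe, fl⟩ := h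
  classical
  set g := Function.invFunOn f ↑F.verts with hg
  have hginv : ∀ a ∈ F.verts, g (f a) = a := by
    intro a ha
    exact finj.leftInvOn_invFunOn ha
  have hsurj : ∀ w ∈ G.verts, ∃ a ∈ F.verts, f a = w := by
    intro w hw
    rw [← fv] at hw
    exact Finset.mem_image.mp hw
  refine ⟨g, ?_, ?_, ?_, ?_⟩
  · intro w1 hw1 w2 hw2 hgw
    simp only [Finset.mem_coe] at hw1 hw2
    obtain ⟨a1, ha1, rfl⟩ := hsurj _ hw1
    obtain ⟨a2, ha2, rfl⟩ := hsurj _ hw2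
    rw [hginv _ ha1, hginv _ ha2] at hgw
    rw [hgw]
  · apply Finset.Subset.antisymm
    · intro w hw
      obtain ⟨w', hw', rfl⟩ := Finset.mem_image.mp hw
      obtain ⟨a, ha, rfl⟩ := hsurj _ hw'
      rw [hginv _ ha]; exact ha
    · intro a ha
      refine Finset.mem_image.mpr ⟨f a, fv ▸ Finset.mem_image_of_mem f ha, hginv _ ha⟩
  · rw [← fe, Finset.image_image]
    have : ∀ e ∈ F.edges, (Sym2.map g ∘ Sym2.map f) e = e := by
      intro e he
      simp only [Function.comp_apply]
      rw [Sym2.map_map]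
      have : Sym2.map (g ∘ f) e = Sym2.map id e := by
        apply Sym2.map_congr
        intro v hv
        exact hginv v ((hF.1 e he).2 v hv)
      rw [this, Sym2.map_id, id]
    calc F.edges.image (Sym2.map g ∘ Sym2.map f) = F.edges.image id := Finset.image_congr this
      _ = F.edges := Finset.image_id
  · intro x
    rw [fl x, hginv _ (hF.2 x)]

end PreForest

namespace TuffleyAux

open PreForest

variable {X : Type}

lemma setoid_r_iff {F G : XForest X} :
    (tuffleySetoid X).r F G ↔ Relation.EqvGen xfIso F G := Iff.rfl

lemma eqv_iso {F G : XForest X} (h : (tuffleySetoid X).r F G) : IsIso F.1 G.1 := by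
  rw [setoid_r_iff] at h
  induction h with
  | rel x y h => exact h
  | refl x => exact iso_refl x.1
  | symm x y h ih => exact iso_symm x.2.good ih
  | trans x y z h1 h2 ih1 ih2 => exact iso_trans ih1 ih2

lemma exact_iso {F G : XForest X} (h : mkT F = mkT G) : IsIso F.1 G.1 :=
  eqv_iso (Quotient.exact h)

lemma sound_mk {F G : XForest X} (h : xfIso F G) : mkT F = mkT G :=
  Quotient.sound (Relation.EqvGen.rel _ _ h)

/-- Number of edges, invariant on isomorphism classes. -/
noncomputable def cnt : Tuffley X → ℕ :=
  Quotient.lift (fun F : XForest X => F.1.edges.card) (by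
    intro F G h
    have hiso := eqv_iso h
    obtain ⟨f, finj, fv, fe, fl⟩ := hiso
    show F.1.edges.card = G.1.edges.card
    rw [← fe, Finset.card_image_of_injOn (sym2_map_injOn finj _ (fun e he => (F.2.edge_ok e he).2))])

/-- Number of vertices, invariant on isomorphism classes. -/
noncomputable def vnt : Tuffley X → ℕ :=
  Quotient.lift (fun F : XForest X => F.1.verts.card) (by
    intro F G h
    have hiso := eqv_iso h
    obtain ⟨f, finj, fv, fe, fl⟩ := hiso
    show F.1.verts.card = G.1.verts.card
    rw [← fv, Finset.card_image_of_injOn finj])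

lemma cnt_mk (F : XForest X) : cnt (mkT F) = F.1.edges.card := rfl

lemma vnt_mk (F : XForest X) : vnt (mkT F) = F.1.verts.card := rfl

lemma step_edges_lt {F G : PreForest X} (h : PreForest.Step F G) :
    G.edges.card < F.edges.card := by
  cases h with
  | contract u v hmem hne =>
    have hpos : 0 < F.edges.card := Finset.card_pos.mpr ⟨_, hmem⟩
    have hdiag : s(u, u) ∈ F.edges.image (Sym2.map fun w => if w = v then u else w) := by
      refine Finset.mem_image.mpr ⟨s(u, v), hmem, ?_⟩
      rw [Sym2.map_pair_eq]
      simp [hne]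
    have hsub : (F.contractEdge u v).edges ⊆
        (F.edges.image (Sym2.map fun w => if w = v then u else w)).erase s(u, u) := by
      intro e he
      simp only [PreForest.contractEdge, Finset.mem_filter] at he
      refine Finset.mem_erase.mpr ⟨?_, he.1⟩
      intro hcon
      exact he.2 (hcon ▸ Sym2.mk_isDiag_iff.mpr rfl)
    calc (F.contractEdge u v).edges.card
        ≤ ((F.edges.image (Sym2.map fun w => if w = v then u else w)).erase s(u, u)).card :=
          Finset.card_le_card hsub
      _ = (F.edges.image (Sym2.map fun w => if w = v then u else w)).card - 1 :=
          Finset.card_erase_of_mem hdiag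
      _ ≤ F.edges.card - 1 := Nat.sub_le_sub_right Finset.card_image_le 1
      _ < F.edges.card := Nat.sub_lt hpos one_pos
  | delete e hsafe =>
    exact Finset.card_lt_card (Finset.erase_ssubset hsafe.1)

lemma rtg_edges_le {F G : PreForest X} (h : Relation.ReflTransGen PreForest.Step F G) :
    G.edges.card ≤ F.edges.card := by
  induction h with
  | refl => exact le_rfl
  | tail hab hbc ih => exact le_trans (le_of_lt (step_edges_lt hbc)) ih

lemma iso_edges_card_le {H F : PreForest X} (h : PreForest.IsIso H F) :
    F.edges.card ≤ H.edges.card := by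
  obtain ⟨f, _, _, fe, _⟩ := h
  rw [← fe]
  exact Finset.card_image_le

lemma tle_refl (x : Tuffley X) : tle x x := by
  obtain ⟨F, rfl⟩ := Quotient.exists_rep x
  exact ⟨F, F, rfl, rfl, F.1, Relation.ReflTransGen.refl, iso_refl F.1⟩

lemma tle_cnt_le {x y : Tuffley X} (h : tle x y) : cnt x ≤ cnt y := by
  obtain ⟨F, G, rfl, rfl, H, hchain, hiso⟩ := h
  rw [cnt_mk, cnt_mk]
  exact le_trans (iso_edges_card_le hiso) (rtg_edges_le hchain)

lemma tlt_cnt_lt {x y : Tuffley X} (h : tlt x y) : cnt x < cnt y := by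
  obtain ⟨⟨F, G, rfl, rfl, H, hchain, hiso⟩, hnot⟩ := h
  rcases Relation.ReflTransGen.cases_head hchain with heq | ⟨K, hstep, hrest⟩
  · exfalso
    apply hnot
    have hGF : PreForest.IsIso G.1 F.1 := heq ▸ hiso
    have : mkT G = mkT F := sound_mk hGF
    rw [this]
    exact tle_refl _
  · rw [cnt_mk, cnt_mk]
    calc F.1.edges.card ≤ H.edges.card := iso_edges_card_le hiso
      _ ≤ K.edges.card := rtg_edges_le hrest
      _ < G.1.edges.card := step_edges_lt hstep

end TuffleyAux

namespace PreForest

variable {X : Type}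

lemma ext' {F G : PreForest X} (hv : F.verts = G.verts) (he : F.edges = G.edges)
    (hl : F.labelOf = G.labelOf) : F = G := by
  cases F; cases G
  simp only [mk.injEq]
  exact ⟨hv, he, hl⟩

lemma mem_contract_edges {F : PreForest X} {u v : ℕ} {e : Sym2 ℕ} :
    e ∈ (F.contractEdge u v).edges ↔
      (∃ e₀ ∈ F.edges, Sym2.map (fun w => if w = v then u else w) e₀ = e) ∧ ¬ e.IsDiag := by
  simp [contractEdge, Finset.mem_filter, Finset.mem_image]

lemma contract_good {F : PreForest X} (hed : ∀ e ∈ F.edges, ∀ w ∈ e, w ∈ F.verts)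
    (hlm : ∀ x, F.labelOf x ∈ F.verts) {u v : ℕ} (hu : u ∈ F.verts) (huv : u ≠ v) :
    (∀ e ∈ (F.contractEdge u v).edges, ¬ e.IsDiag ∧ ∀ w ∈ e, w ∈ (F.contractEdge u v).verts) ∧
      ∀ x, (F.contractEdge u v).labelOf x ∈ (F.contractEdge u v).verts := by
  constructor
  · intro e he
    rw [mem_contract_edges] at he
    obtain ⟨⟨e₀, he₀, rfl⟩, hnd⟩ := he
    refine ⟨hnd, ?_⟩
    intro w hw
    obtain ⟨w₀, hw₀, rfl⟩ := Sym2.mem_map.mp hw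
    have hw₀v := hed e₀ he₀ w₀ hw₀
    show (if w₀ = v then u else w₀) ∈ F.verts.erase v
    by_cases h : w₀ = v
    · simp [h, Finset.mem_erase, huv, hu]
    · simp [h, Finset.mem_erase, hw₀v]
  · intro x
    show (if F.labelOf x = v then u else F.labelOf x) ∈ F.verts.erase v
    by_cases h : F.labelOf x = v
    · simp [h, Finset.mem_erase, huv, hu]
    · simp [h, Finset.mem_erase, hlm x]

lemma map_isDiag_iff {f : ℕ → ℕ} {S : Set ℕ} (hinj : Set.InjOn f S) {z : Sym2 ℕ}
    (hz : ∀ w ∈ z, w ∈ S) : (Sym2.map f z).IsDiag ↔ z.IsDiag := by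
  induction z using Sym2.inductionOn with | _ x y =>
  rw [Sym2.map_pair_eq, Sym2.mk_isDiag_iff, Sym2.mk_isDiag_iff]
  constructor
  · intro h
    exact hinj (hz x (by simp)) (hz y (by simp)) h
  · intro h
    rw [h]

lemma iso_filter_image {F G : PreForest X} {f : ℕ → ℕ} (finj : Set.InjOn f ↑F.verts)
    (hed : ∀ e ∈ F.edges, ∀ w ∈ e, w ∈ F.verts)
    (fe : F.edges.image (Sym2.map f) = G.edges) {v : ℕ} (hv : v ∈ F.verts) :
    G.edges.filter (fun e => f v ∈ e) = (F.edges.filter (fun e => v ∈ e)).image (Sym2.map f) := by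
  rw [← fe, Finset.filter_image]
  congr 1
  apply Finset.filter_congr
  intro e he
  simp only [Sym2.mem_map]
  constructor
  · rintro ⟨w, hw, hfw⟩
    have : w = v := finj (hed e he w hw) hv hfw
    rwa [this] at hw
  · intro hmem
    exact ⟨v, hmem, rfl⟩

lemma iso_filter_card {F G : PreForest X} {f : ℕ → ℕ} (finj : Set.InjOn f ↑F.verts)
    (hed : ∀ e ∈ F.edges, ∀ w ∈ e, w ∈ F.verts)
    (fe : F.edges.image (Sym2.map f) = G.edges) {v : ℕ} (hv : v ∈ F.verts) :
    (G.edges.filter (fun e => f v ∈ e)).card = (F.edges.filter (fun e => v ∈ e)).card := by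
  rw [iso_filter_image finj hed fe hv]
  apply Finset.card_image_of_injOn
  apply (sym2_map_injOn finj F.edges hed).mono
  exact_mod_cast Finset.filter_subset _ _

lemma contract_iso {F G : PreForest X} {f : ℕ → ℕ}
    (finj : Set.InjOn f ↑F.verts) (fv : F.verts.image f = G.verts)
    (fe : F.edges.image (Sym2.map f) = G.edges) (fl : ∀ x, G.labelOf x = f (F.labelOf x))
    (hed : ∀ e ∈ F.edges, ∀ w ∈ e, w ∈ F.verts) (hlm : ∀ x, F.labelOf x ∈ F.verts)
    {u v : ℕ} (hu : u ∈ F.verts) (hv : v ∈ F.verts) (huv : u ≠ v) :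
    IsIso (F.contractEdge u v) (G.contractEdge (f u) (f v)) := by
  have hfne : ∀ w ∈ F.verts, w ≠ v → f w ≠ f v := by
    intro w hw hwv hcon
    exact hwv (finj hw hv hcon)
  refine ⟨f, ?_, ?_, ?_, ?_⟩
  · exact finj.mono (by exact_mod_cast Finset.erase_subset v F.verts)
  · show (F.verts.erase v).image f = G.verts.erase (f v)
    ext w
    simp only [Finset.mem_image, Finset.mem_erase]
    constructor
    · rintro ⟨z, ⟨hzv, hz⟩, rfl⟩
      exact ⟨hfne z hz hzv, fv ▸ Finset.mem_image_of_mem f hz⟩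
    · rintro ⟨hwv, hw⟩
      rw [← fv] at hw
      obtain ⟨z, hz, rfl⟩ := Finset.mem_image.mp hw
      refine ⟨z, ⟨?_, hz⟩, rfl⟩
      intro h
      exact hwv (h ▸ rfl)
  · show ((F.edges.image (Sym2.map fun w => if w = v then u else w)).filter
        (fun e => ¬ e.IsDiag)).image (Sym2.map f)
      = (G.edges.image (Sym2.map fun w => if w = f v then f u else w)).filter (fun e => ¬ e.IsDiag)
    have key : ∀ e ∈ F.edges,
        Sym2.map (fun w => if w = f v then f u else w) (Sym2.map f e)
          = Sym2.map f (Sym2.map (fun w => if w = v then u else w) e) := by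
      intro e he
      rw [Sym2.map_map, Sym2.map_map]
      apply Sym2.map_congr
      intro w hw
      simp only [Function.comp_apply]
      by_cases h : w = v
      · simp [h]
      · simp [h, hfne w (hed e he w hw) h]
    have himg : G.edges.image (Sym2.map fun w => if w = f v then f u else w)
        = (F.edges.image (Sym2.map fun w => if w = v then u else w)).image (Sym2.map f) := by
      rw [← fe, Finset.image_image, Finset.image_image]
      apply Finset.image_congr
      intro e he
      exact key e he
    rw [himg]
    conv_rhs => rw [Finset.filter_image]
    congr 1
    apply Finset.filter_congr
    intro z hz
    obtain ⟨e₀, he₀, rfl⟩ := Finset.mem_image.mp hz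
    have hzin : ∀ w ∈ Sym2.map (fun w => if w = v then u else w) e₀, w ∈ F.verts := by
      intro w hw
      obtain ⟨w₀, hw₀, rfl⟩ := Sym2.mem_map.mp hw
      by_cases h : w₀ = v
      · simpa [h] using hu
      · simpa [h] using hed e₀ he₀ w₀ hw₀
    rw [not_congr (map_isDiag_iff finj hzin)]
  · intro x
    show (if G.labelOf x = f v then f u else G.labelOf x)
        = f (if F.labelOf x = v then u else F.labelOf x)
    rw [fl x]
    by_cases h : F.labelOf x = v
    · simp [h]
    · simp [h, hfne _ (hlm x) h]

lemma contract_swap {F : PreForest X} (hed : ∀ e ∈ F.edges, ∀ w ∈ e, w ∈ F.verts)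
    {u v : ℕ} (hu : u ∈ F.verts) (hv : v ∈ F.verts) (huv : u ≠ v) :
    IsIso (F.contractEdge u v) (F.contractEdge v u) := by
  set t : ℕ → ℕ := fun w => if w = u then v else w with ht
  have htu : t u = v := by simp [ht]
  have htne : ∀ w, w ≠ u → t w = w := by
    intro w hw; simp [ht, hw]
  have hcomp : (fun w => if w = u then v else w) ∘ (fun w => if w = v then u else w)
      = fun w => if w = u then v else w := by
    funext w
    by_cases h1 : w = v
    · simp [h1, huv.symm, Ne.symm huv]
    · by_cases h2 : w = u
      · simp [h1, h2, huv]
      · simp [h1, h2]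
  have hrange : ∀ z ∈ F.edges.image (Sym2.map fun w => if w = v then u else w),
      ∀ w ∈ z, w ∈ F.verts.erase v := by
    intro z hz w hw
    obtain ⟨e₀, he₀, rfl⟩ := Finset.mem_image.mp hz
    obtain ⟨w₀, hw₀, rfl⟩ := Sym2.mem_map.mp hw
    by_cases h : w₀ = v
    · simp [h, Finset.mem_erase, huv, hu]
    · simp [h, Finset.mem_erase, hed e₀ he₀ w₀ hw₀]
  have htinj : Set.InjOn t ↑(F.verts.erase v) := by
    intro z1 h1 z2 h2 hteq
    simp only [Finset.coe_erase, Set.mem_diff, Finset.mem_coe, Set.mem_singleton_iff] at h1 h2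
    by_cases e1 : z1 = u <;> by_cases e2 : z2 = u
    · rw [e1, e2]
    · rw [e1, htu, htne z2 e2] at hteq
      exact absurd hteq.symm h2.2
    · rw [e2, htu, htne z1 e1] at hteq
      exact absurd hteq h1.2
    · rwa [htne z1 e1, htne z2 e2] at hteq
  refine ⟨t, htinj, ?_, ?_, ?_⟩
  · show (F.verts.erase v).image t = F.verts.erase u
    ext w
    simp only [Finset.mem_image, Finset.mem_erase]
    constructor
    · rintro ⟨z, ⟨hzv, hz⟩, rfl⟩
      by_cases h : z = u
      · rw [h, htu]
        exact ⟨Ne.symm huv, hv⟩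
      · rw [htne z h]
        exact ⟨h, hz⟩
    · rintro ⟨hwu, hw⟩
      by_cases h : w = v
      · exact ⟨u, ⟨huv, hu⟩, by rw [htu, h]⟩
      · exact ⟨w, ⟨h, hw⟩, htne w hwu⟩
  · show ((F.edges.image (Sym2.map fun w => if w = v then u else w)).filter
        (fun e => ¬ e.IsDiag)).image (Sym2.map t)
      = (F.edges.image (Sym2.map fun w => if w = u then v else w)).filter (fun e => ¬ e.IsDiag)
    have himg : F.edges.image (Sym2.map fun w => if w = u then v else w)
        = (F.edges.image (Sym2.map fun w => if w = v then u else w)).image (Sym2.map t) := by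
      rw [Finset.image_image]
      apply Finset.image_congr
      intro e _
      show Sym2.map _ e = (Sym2.map t ∘ Sym2.map _) e
      simp only [Function.comp_apply]
      rw [Sym2.map_map]
      apply Sym2.map_congr
      intro w _
      have := congrFun hcomp w
      exact this.symm
    rw [himg]
    conv_rhs => rw [Finset.filter_image]
    congr 1
    apply Finset.filter_congr
    intro z hz
    rw [not_congr (map_isDiag_iff htinj (hrange z hz))]
  · intro x
    show (if F.labelOf x = u then v else F.labelOf x)
        = t (if F.labelOf x = v then u else F.labelOf x)
    by_cases h1 : F.labelOf x = v
    · rw [if_pos h1, htu, if_neg (fun hc => huv (hc.symm.trans h1))]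
      exact h1
    · by_cases h2 : F.labelOf x = u
      · rw [if_pos h2, if_neg h1, h2, htu]
      · rw [if_neg h2, if_neg h1, htne _ h2]

lemma subdivide_comm (F : PreForest X) (a b m ℓ : ℕ) :
    F.subdivideAttach a b m ℓ = F.subdivideAttach b a m ℓ := by
  refine ext' rfl ?_ rfl
  show insert s(ℓ, m) (insert s(a, m) (insert s(b, m) (F.edges.erase s(a, b))))
      = insert s(ℓ, m) (insert s(b, m) (insert s(a, m) (F.edges.erase s(b, a))))
  rw [show s(b, a) = s(a, b) from Sym2.eq_swap]
  exact congrArg (insert s(ℓ, m)) (Finset.insert_comm _ _ _)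

lemma contract_subdivide (F : PreForest X) (a b m ℓ : ℕ)
    (hed : ∀ e ∈ F.edges, ∀ w ∈ e, w ∈ F.verts) (hnd : ∀ e ∈ F.edges, ¬ e.IsDiag)
    (hlm : ∀ x, F.labelOf x ∈ F.verts)
    (hm : m ∉ F.verts) (hab : s(a, b) ∈ F.edges) (hla : ℓ ≠ a) (hlb : ℓ ≠ b) (hlm2 : ℓ ≠ m) :
    (F.subdivideAttach a b m ℓ).contractEdge a m = F.addEdge s(ℓ, a) := by
  have haV : a ∈ F.verts := hed _ hab a (Sym2.mem_mk_left a b)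
  have hbV : b ∈ F.verts := hed _ hab b (Sym2.mem_mk_right a b)
  have ham : a ≠ m := fun h => hm (h ▸ haV)
  have hbm : b ≠ m := fun h => hm (h ▸ hbV)
  have hanb : a ≠ b := fun h => (hnd _ hab) (Sym2.mk_isDiag_iff.mpr h)
  apply ext'
  · show (insert m F.verts).erase m = F.verts
    exact Finset.erase_insert hm
  · show ((insert s(ℓ, m) (insert s(a, m) (insert s(b, m) (F.edges.erase s(a, b))))).image
        (Sym2.map fun w => if w = m then a else w)).filter (fun e => ¬ e.IsDiag)
      = insert s(ℓ, a) F.edges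
    rw [Finset.image_insert, Finset.image_insert, Finset.image_insert]
    have e1 : Sym2.map (fun w => if w = m then a else w) s(ℓ, m) = s(ℓ, a) := by
      rw [Sym2.map_pair_eq]; simp [hlm2]
    have e2 : Sym2.map (fun w => if w = m then a else w) s(a, m) = s(a, a) := by
      rw [Sym2.map_pair_eq]; simp [ham]
    have e3 : Sym2.map (fun w => if w = m then a else w) s(b, m) = s(b, a) := by
      rw [Sym2.map_pair_eq]; simp [hbm]
    have e4 : (F.edges.erase s(a, b)).image (Sym2.map fun w => if w = m then a else w)
        = F.edges.erase s(a, b) := by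
      have : ∀ e ∈ F.edges.erase s(a, b),
          Sym2.map (fun w => if w = m then a else w) e = id e := by
        intro e he
        have he' := Finset.mem_of_mem_erase he
        show Sym2.map _ e = _
        have : Sym2.map (fun w => if w = m then a else w) e = Sym2.map id e := by
          apply Sym2.map_congr
          intro w hw
          have : w ≠ m := fun h => hm (h ▸ hed e he' w hw)
          simp [this]
        rw [this, Sym2.map_id]
      rw [Finset.image_congr this, Finset.image_id]
    rw [e1, e2, e3, e4]
    rw [Finset.filter_insert, Finset.filter_insert, Finset.filter_insert]
    rw [if_pos (show ¬ (s(ℓ, a)).IsDiag by simp [Sym2.mk_isDiag_iff, hla])]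
    rw [if_neg (show ¬ ¬ (s(a, a)).IsDiag by simp [Sym2.mk_isDiag_iff])]
    rw [if_pos (show ¬ (s(b, a)).IsDiag by simp [Sym2.mk_isDiag_iff]; exact fun h => hanb h.symm)]
    rw [Finset.filter_true_of_mem (fun e he => hnd e (Finset.mem_of_mem_erase he))]
    rw [show s(b, a) = s(a, b) from Sym2.eq_swap, Finset.insert_erase hab]
  · show (fun x => if F.labelOf x = m then a else F.labelOf x) = F.labelOf
    funext x
    have hne : F.labelOf x ≠ m := fun h => hm (h ▸ hlm x)
    simp [hne]

lemma contract_subdivide_l (F : PreForest X) (a b m ℓ : ℕ)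
    (hed : ∀ e ∈ F.edges, ∀ w ∈ e, w ∈ F.verts) (hnd : ∀ e ∈ F.edges, ¬ e.IsDiag)
    (hlm : ∀ x, F.labelOf x ∈ F.verts)
    (hm : m ∉ F.verts) (hab : s(a, b) ∈ F.edges) (hla : ℓ ≠ a) (hlb : ℓ ≠ b) (hlm2 : ℓ ≠ m) :
    (F.subdivideAttach a b m ℓ).contractEdge ℓ m =
      ⟨F.verts, insert s(a, ℓ) (insert s(b, ℓ) (F.edges.erase s(a, b))), F.labelOf⟩ := by
  have haV : a ∈ F.verts := hed _ hab a (Sym2.mem_mk_left a b)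
  have hbV : b ∈ F.verts := hed _ hab b (Sym2.mem_mk_right a b)
  have ham : a ≠ m := fun h => hm (h ▸ haV)
  have hbm : b ≠ m := fun h => hm (h ▸ hbV)
  apply ext'
  · exact Finset.erase_insert hm
  · show ((insert s(ℓ, m) (insert s(a, m) (insert s(b, m) (F.edges.erase s(a, b))))).image
        (Sym2.map fun w => if w = m then ℓ else w)).filter (fun e => ¬ e.IsDiag)
      = insert s(a, ℓ) (insert s(b, ℓ) (F.edges.erase s(a, b)))
    rw [Finset.image_insert, Finset.image_insert, Finset.image_insert]
    have e1 : Sym2.map (fun w => if w = m then ℓ else w) s(ℓ, m) = s(ℓ, ℓ) := by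
      rw [Sym2.map_pair_eq]; simp [hlm2]
    have e2 : Sym2.map (fun w => if w = m then ℓ else w) s(a, m) = s(a, ℓ) := by
      rw [Sym2.map_pair_eq]; simp [ham]
    have e3 : Sym2.map (fun w => if w = m then ℓ else w) s(b, m) = s(b, ℓ) := by
      rw [Sym2.map_pair_eq]; simp [hbm]
    have e4 : (F.edges.erase s(a, b)).image (Sym2.map fun w => if w = m then ℓ else w)
        = F.edges.erase s(a, b) := by
      have : ∀ e ∈ F.edges.erase s(a, b),
          Sym2.map (fun w => if w = m then ℓ else w) e = id e := by
        intro e he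
        have he' := Finset.mem_of_mem_erase he
        have : Sym2.map (fun w => if w = m then ℓ else w) e = Sym2.map id e := by
          apply Sym2.map_congr
          intro w hw
          have : w ≠ m := fun h => hm (h ▸ hed e he' w hw)
          simp [this]
        rw [this, Sym2.map_id]
      rw [Finset.image_congr this, Finset.image_id]
    rw [e1, e2, e3, e4]
    rw [Finset.filter_insert, Finset.filter_insert, Finset.filter_insert]
    rw [if_neg (show ¬ ¬ (s(ℓ, ℓ)).IsDiag by simp [Sym2.mk_isDiag_iff])]
    rw [if_pos (show ¬ (s(a, ℓ)).IsDiag by simp [Sym2.mk_isDiag_iff]; exact fun h => hla h.symm)]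
    rw [if_pos (show ¬ (s(b, ℓ)).IsDiag by simp [Sym2.mk_isDiag_iff]; exact fun h => hlb h.symm)]
    rw [Finset.filter_true_of_mem (fun e he => hnd e (Finset.mem_of_mem_erase he))]
  · show (fun x => if F.labelOf x = m then ℓ else F.labelOf x) = F.labelOf
    funext x
    have hne : F.labelOf x ≠ m := fun h => hm (h ▸ hlm x)
    simp [hne]

end PreForest

namespace PreForest

variable {X : Type}

/-- The set of neighbors of `u`. -/
noncomputable def nbrs (F : PreForest X) (u : ℕ) : Finset ℕ :=
  (F.edges.filter (fun e => u ∈ e)).image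
    (fun e => if h : u ∈ e then (Sym2.Mem.other' h) else 0)

lemma mem_nbrs {F : PreForest X} {u w : ℕ} : w ∈ F.nbrs u ↔ s(u, w) ∈ F.edges := by
  constructor
  · intro h
    obtain ⟨e, he, hw⟩ := Finset.mem_image.mp h
    obtain ⟨he1, he2⟩ := Finset.mem_filter.mp he
    rw [dif_pos he2] at hw
    rw [← Sym2.other_spec' he2, hw] at he1
    exact he1
  · intro h
    have hmem : u ∈ s(u, w) := Sym2.mem_mk_left u w
    refine Finset.mem_image.mpr ⟨s(u, w), Finset.mem_filter.mpr ⟨h, hmem⟩, ?_⟩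
    rw [dif_pos hmem]
    have := Sym2.other_spec' hmem
    rw [Sym2.eq_iff] at this
    rcases this with ⟨_, h2⟩ | ⟨h1, h2⟩
    · exact h2
    · rw [h2, h1]

lemma card_nbrs (F : PreForest X) (u : ℕ) : (F.nbrs u).card = F.degree u := by
  apply Finset.card_image_of_injOn
  intro e1 h1 e2 h2 heq
  simp only [Finset.coe_filter, Set.mem_setOf_eq] at h1 h2
  have heq' : (if h : u ∈ e1 then Sym2.Mem.other' h else 0)
      = (if h : u ∈ e2 then Sym2.Mem.other' h else 0) := heq
  rw [dif_pos h1.2, dif_pos h2.2] at heq'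
  rename' heq' => heq
  rw [← Sym2.other_spec' h1.2, ← Sym2.other_spec' h2.2, heq]

lemma rigid (F : PreForest X) (hX : F.IsXForest) (f : ℕ → ℕ)
    (finj : Set.InjOn f ↑F.verts) (fv : F.verts.image f = F.verts)
    (fe : F.edges.image (Sym2.map f) = F.edges) (fl : ∀ y, F.labelOf y = f (F.labelOf y)) :
    ∀ v ∈ F.verts, f v = v := by
  classical
  set σ : ℕ → ℕ := fun w => if w ∈ F.verts then f w else w with hσ
  have hfmem : ∀ w ∈ F.verts, f w ∈ F.verts := fun w hw => fv ▸ Finset.mem_image_of_mem f hw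
  have hσv : ∀ w ∈ F.verts, σ w = f w := by
    intro w hw; simp [hσ, hw]
  have hσinj : Function.Injective σ := by
    intro w1 w2 h
    by_cases h1 : w1 ∈ F.verts <;> by_cases h2 : w2 ∈ F.verts
    · rw [hσv _ h1, hσv _ h2] at h
      exact finj h1 h2 h
    · rw [hσv _ h1] at h
      simp only [hσ, if_neg h2] at h
      exact absurd (h ▸ hfmem _ h1) h2
    · rw [hσv _ h2] at h
      simp only [hσ, if_neg h1] at h
      exact absurd (h.symm ▸ hfmem _ h2) h1
    · simp only [hσ, if_neg h1, if_neg h2] at h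
      exact h
  suffices hfix : ∀ v ∈ F.verts, σ v = v by
    intro v hv
    have := hfix v hv
    rwa [hσv _ hv] at this
  by_contra hcon
  push_neg at hcon
  obtain ⟨v0, hv0, hv0ne⟩ := hcon
  set U := F.verts.filter (fun w => σ w ≠ w) with hU
  have hv0U : v0 ∈ U := Finset.mem_filter.mpr ⟨hv0, hv0ne⟩
  have hlab_fix : ∀ y : X, σ (F.labelOf y) = F.labelOf y := by
    intro y
    rw [hσv _ (hX.label_mem y), ← fl y]
  have hedge : ∀ {p q : ℕ}, s(p, q) ∈ F.edges → s(σ p, σ q) ∈ F.edges := by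
    intro p q h
    have hp := (hX.edge_ok _ h).2 p (Sym2.mem_mk_left p q)
    have hq := (hX.edge_ok _ h).2 q (Sym2.mem_mk_right p q)
    have hmap : Sym2.map f s(p, q) ∈ F.edges := fe ▸ Finset.mem_image_of_mem _ h
    rwa [Sym2.map_pair_eq, ← hσv _ hp, ← hσv _ hq] at hmap
  have hedge_nd : ∀ {p q : ℕ}, s(p, q) ∈ F.edges → p ≠ q := by
    intro p q h hc
    exact (hX.edge_ok _ h).1 (hc ▸ Sym2.mk_isDiag_iff.mpr rfl)
  have hnbrs_verts : ∀ {u w : ℕ}, s(u, w) ∈ F.edges → w ∈ F.verts := by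
    intro u w h
    exact (hX.edge_ok _ h).2 w (Sym2.mem_mk_right u w)
  -- at most one fixed neighbor for a non-fixed vertex
  have hfixnbr : ∀ u ∈ U, ∀ w1 ∈ F.nbrs u, ∀ w2 ∈ F.nbrs u,
      σ w1 = w1 → σ w2 = w2 → w1 = w2 := by
    intro u hu w1 hw1 w2 hw2 hf1 hf2
    by_contra hne
    obtain ⟨huV, huσ⟩ := Finset.mem_filter.mp hu
    rw [mem_nbrs] at hw1 hw2
    have hne1 : u ≠ w1 := hedge_nd hw1
    have hne2 : u ≠ w2 := hedge_nd hw2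
    have hmap1 : s(σ u, w1) ∈ F.edges := by
      have := hedge hw1; rwa [hf1] at this
    have hmap2 : s(σ u, w2) ∈ F.edges := by
      have := hedge hw2; rwa [hf2] at this
    have hσu_ne1 : σ u ≠ w1 := fun hc => hne1 (hσinj (hc.trans hf1.symm))
    have hσu_ne2 : σ u ≠ w2 := fun hc => hne2 (hσinj (hc.trans hf2.symm))
    have adj1 : F.toGraph.Adj w1 u := ⟨hne1.symm, by rwa [Sym2.eq_swap]⟩
    have adj2 : F.toGraph.Adj u w2 := ⟨hne2, hw2⟩
    have adj3 : F.toGraph.Adj w1 (σ u) := ⟨fun hc => hσu_ne1 hc.symm, by rwa [Sym2.eq_swap]⟩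
    have adj4 : F.toGraph.Adj (σ u) w2 := ⟨hσu_ne2, hmap2⟩
    have hP1 : (SimpleGraph.Walk.cons adj1 (SimpleGraph.Walk.cons adj2
        SimpleGraph.Walk.nil)).IsPath := by
      rw [SimpleGraph.Walk.cons_isPath_iff]
      constructor
      · rw [SimpleGraph.Walk.cons_isPath_iff]
        refine ⟨SimpleGraph.Walk.IsPath.nil, ?_⟩
        simp [hne2]
      · simp [hne1.symm, hne]
    have hP2 : (SimpleGraph.Walk.cons adj3 (SimpleGraph.Walk.cons adj4
        SimpleGraph.Walk.nil)).IsPath := by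
      rw [SimpleGraph.Walk.cons_isPath_iff]
      constructor
      · rw [SimpleGraph.Walk.cons_isPath_iff]
        refine ⟨SimpleGraph.Walk.IsPath.nil, ?_⟩
        simp [hσu_ne2]
      · intro hmem
        simp only [SimpleGraph.Walk.support_cons, SimpleGraph.Walk.support_nil,
          List.mem_cons, List.mem_singleton, List.not_mem_nil, or_false] at hmem
        rcases hmem with h | h
        · exact hσu_ne1 h.symm
        · exact hne h
    have := SimpleGraph.IsAcyclic.path_unique hX.acyclic
      ⟨_, hP1⟩ ⟨_, hP2⟩
    have hsupeq := congrArg (fun q : F.toGraph.Path w1 w2 =>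
      (q : F.toGraph.Walk w1 w2).support) this
    simp only [SimpleGraph.Walk.support_cons, SimpleGraph.Walk.support_nil,
      List.cons.injEq, and_true, true_and] at hsupeq
    exact huσ hsupeq.symm
  -- every vertex of U has two distinct neighbors in U
  have htwo : ∀ u ∈ U, ∃ c1 ∈ U, ∃ c2 ∈ U, c1 ≠ c2 ∧
      s(u, c1) ∈ F.edges ∧ s(u, c2) ∈ F.edges := by
    intro u hu
    obtain ⟨huV, huσ⟩ := Finset.mem_filter.mp hu
    have hunl : ¬ F.IsLabeled u := by
      rintro ⟨y, rfl⟩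
      exact huσ (hlab_fix y)
    have hdeg : 2 < F.degree u := hX.unlabeled_deg u huV hunl
    have hcard : 3 ≤ (F.nbrs u).card := by
      rw [card_nbrs]; omega
    have hsplit := Finset.card_filter_add_card_filter_not
      (s := F.nbrs u) (p := fun w => σ w = w)
    have hfixcard : ((F.nbrs u).filter (fun w => σ w = w)).card ≤ 1 := by
      apply Finset.card_le_one.mpr
      intro a ha b hb
      obtain ⟨ha1, ha2⟩ := Finset.mem_filter.mp ha
      obtain ⟨hb1, hb2⟩ := Finset.mem_filter.mp hb
      exact hfixnbr u hu a ha1 b hb1 ha2 hb2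
    have hnonfix : 1 < ((F.nbrs u).filter (fun w => ¬ σ w = w)).card := by omega
    obtain ⟨c1, hc1, c2, hc2, hcne⟩ := Finset.one_lt_card.mp hnonfix
    obtain ⟨hc1n, hc1σ⟩ := Finset.mem_filter.mp hc1
    obtain ⟨hc2n, hc2σ⟩ := Finset.mem_filter.mp hc2
    rw [mem_nbrs] at hc1n hc2n
    refine ⟨c1, ?_, c2, ?_, hcne, hc1n, hc2n⟩
    · exact Finset.mem_filter.mpr ⟨hnbrs_verts hc1n, hc1σ⟩
    · exact Finset.mem_filter.mpr ⟨hnbrs_verts hc2n, hc2σ⟩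
  -- longest path inside U
  set Q : ℕ → Prop := fun n => ∃ (c : ℕ) (p : F.toGraph.Walk c v0),
    p.IsPath ∧ (∀ w ∈ p.support, w ∈ U) ∧ p.length = n with hQdef
  have hQ0 : Q 0 := by
    refine ⟨v0, SimpleGraph.Walk.nil, SimpleGraph.Walk.IsPath.nil, ?_, rfl⟩
    intro w hw
    simp only [SimpleGraph.Walk.support_nil, List.mem_singleton] at hw
    rwa [hw]
  have hbound : ∀ n, Q n → n < U.card := by
    rintro n ⟨c, p, hp, hsupU, hlen⟩
    have h1 : p.support.length = n + 1 := by rw [SimpleGraph.Walk.length_support, hlen]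
    have h2 : p.support.toFinset ⊆ U := by
      intro w hw
      exact hsupU w (List.mem_toFinset.mp hw)
    have h3 : p.support.toFinset.card = n + 1 := by
      rw [List.toFinset_card_of_nodup hp.support_nodup, h1]
    have := Finset.card_le_card h2
    omega
  set N := Nat.findGreatest Q U.card with hN
  have hQN : Q N := Nat.findGreatest_spec (Nat.zero_le _) hQ0
  have hmax : ¬ Q (N + 1) := by
    intro hq
    have hle : N + 1 ≤ U.card := le_of_lt (hbound (N + 1) hq)
    exact Nat.findGreatest_is_greatest (Nat.lt_succ_self N) hle hq
  obtain ⟨c, p, hp, hsupU, hlen⟩ := hQN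
  have hcU : c ∈ U := hsupU c p.start_mem_support
  obtain ⟨c1, hc1U, c2, hc2U, hc12, he1, he2⟩ := htwo c hcU
  have hadj1 : F.toGraph.Adj c1 c := ⟨(hedge_nd he1).symm, by rwa [Sym2.eq_swap]⟩
  have hadj2 : F.toGraph.Adj c2 c := ⟨(hedge_nd he2).symm, by rwa [Sym2.eq_swap]⟩
  have hext : ∀ d, d ∈ U → F.toGraph.Adj d c → d ∈ p.support := by
    intro d hdU hadj
    by_contra hd
    apply hmax
    refine ⟨d, SimpleGraph.Walk.cons hadj p, ?_, ?_, ?_⟩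
    · rw [SimpleGraph.Walk.cons_isPath_iff]
      exact ⟨hp, hd⟩
    · intro w hw
      rw [SimpleGraph.Walk.support_cons, List.mem_cons] at hw
      rcases hw with rfl | hw
      · exact hdU
      · exact hsupU w hw
    · simp [hlen]
  have hc1mem : c1 ∈ p.support := hext c1 hc1U hadj1
  have hc2mem : c2 ∈ p.support := hext c2 hc2U hadj2
  -- p cannot be nil
  cases p with
  | nil =>
    simp only [SimpleGraph.Walk.support_nil, List.mem_singleton] at hc1mem
    exact hadj1.ne (hc1mem)
  | @cons _ d _ hadj q =>
    -- pick the neighbor which is not the second vertex d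
    have hkey : ∀ c', c' ∈ (SimpleGraph.Walk.cons hadj q).support → F.toGraph.Adj c' c →
        c' ≠ d → False := by
      intro c' hmem hadj' hne'
      have hpath' := hp.takeUntil hmem
      have hnotedge : s(c', c) ∉ ((SimpleGraph.Walk.cons hadj q).takeUntil c' hmem).edges := by
        intro hin
        have hin' := SimpleGraph.Walk.edges_takeUntil_subset _ hmem hin
        rw [SimpleGraph.Walk.edges_cons, List.mem_cons] at hin'
        rcases hin' with heq | hin'
        · rw [Sym2.eq_iff] at heq
          rcases heq with ⟨h1, _⟩ | ⟨h1, _⟩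
          · exact hadj'.ne h1
          · exact hne' h1
        · have : c ∈ q.support := SimpleGraph.Walk.snd_mem_support_of_mem_edges q hin'
          rw [SimpleGraph.Walk.cons_isPath_iff] at hp
          exact hp.2 this
      have hcyc : (SimpleGraph.Walk.cons hadj'
          ((SimpleGraph.Walk.cons hadj q).takeUntil c' hmem)).IsCycle := by
        rw [SimpleGraph.Walk.cons_isCycle_iff]
        exact ⟨hpath', hnotedge⟩
      exact hX.acyclic _ hcyc
    by_cases h1d : c1 = d
    · have h2d : c2 ≠ d := fun h => hc12 (h1d.trans h.symm)
      exact hkey c2 hc2mem hadj2 h2d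
    · exact hkey c1 hc1mem hadj1 h1d

end PreForest

namespace PreForest

variable {X : Type}

/-- If the forest obtained from `F0` by attaching `ℓ` at `w` is isomorphic to the one
obtained by attaching `ℓ` at `va`, then `va = w`. -/
lemma attach_case (F0 : XForest X) (ℓ w va : ℕ) (x0 : X)
    (hlab : F0.1.labelOf x0 = ℓ) (hlV : ℓ ∈ F0.1.verts)
    (hlO : ∀ e ∈ F0.1.edges, ℓ ∉ e)
    (hwV : w ∈ F0.1.verts) (hvaV : va ∈ F0.1.verts) (hva_ne_l : va ≠ ℓ)
    (Φ : IsIso (F0.1.addEdge s(ℓ, w)) (F0.1.addEdge s(ℓ, va))) : va = w := by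
  classical
  obtain ⟨φ, φinj, φv, φe, φl⟩ := Φ
  have hew : ∀ e ∈ F0.1.edges, ∀ z ∈ e, z ∈ F0.1.verts := fun e he => (F0.2.edge_ok e he).2
  have hedP : ∀ e ∈ (F0.1.addEdge s(ℓ, w)).edges, ∀ z ∈ e, z ∈ (F0.1.addEdge s(ℓ, w)).verts := by
    intro e he z hz
    rcases Finset.mem_insert.mp he with rfl | he'
    · rcases Sym2.mem_iff.mp hz with rfl | rfl
      · exact hlV
      · exact hwV
    · exact hew e he' z hz
  have hφl : φ ℓ = ℓ := by
    have h := φl x0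
    rw [show (F0.1.addEdge s(ℓ, va)).labelOf x0 = ℓ from hlab,
      show (F0.1.addEdge s(ℓ, w)).labelOf x0 = ℓ from hlab] at h
    exact h.symm
  have hfilter := iso_filter_image (F := F0.1.addEdge s(ℓ, w)) (G := F0.1.addEdge s(ℓ, va))
    φinj hedP φe (v := ℓ) hlV
  rw [hφl] at hfilter
  have hL : (F0.1.addEdge s(ℓ, va)).edges.filter (fun e => ℓ ∈ e) = {s(ℓ, va)} := by
    show (insert s(ℓ, va) F0.1.edges).filter (fun e => ℓ ∈ e) = {s(ℓ, va)}
    rw [Finset.filter_insert, if_pos (Sym2.mem_mk_left ℓ va),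
      Finset.filter_eq_empty_iff.mpr (fun e he => hlO e he), Finset.insert_empty]
  have hR : (F0.1.addEdge s(ℓ, w)).edges.filter (fun e => ℓ ∈ e) = {s(ℓ, w)} := by
    show (insert s(ℓ, w) F0.1.edges).filter (fun e => ℓ ∈ e) = {s(ℓ, w)}
    rw [Finset.filter_insert, if_pos (Sym2.mem_mk_left ℓ w),
      Finset.filter_eq_empty_iff.mpr (fun e he => hlO e he), Finset.insert_empty]
  rw [hL, hR, Finset.image_singleton, Sym2.map_pair_eq, hφl] at hfilter
  have hsing : s(ℓ, va) = s(ℓ, φ w) := Finset.singleton_injective hfilter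
  have hφw : φ w = va := by
    rw [Sym2.eq_iff] at hsing
    rcases hsing with ⟨_, h2⟩ | ⟨h1, h2⟩
    · exact h2.symm
    · exact absurd h2 hva_ne_l
  have hims : s(ℓ, va) ∉ F0.1.edges.image (Sym2.map φ) := by
    intro h
    obtain ⟨e, he, hmap⟩ := Finset.mem_image.mp h
    have hmem : ℓ ∈ Sym2.map φ e := hmap ▸ Sym2.mem_mk_left ℓ va
    obtain ⟨z, hz, hφz⟩ := Sym2.mem_map.mp hmem
    have : z = ℓ := φinj (hew e he z hz) hlV (hφz.trans hφl.symm)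
    exact hlO e he (this ▸ hz)
  have hinsert : insert s(ℓ, va) (F0.1.edges.image (Sym2.map φ))
      = insert s(ℓ, va) F0.1.edges := by
    have h : (insert s(ℓ, w) F0.1.edges).image (Sym2.map φ)
        = insert s(ℓ, va) F0.1.edges := φe
    rw [Finset.image_insert, Sym2.map_pair_eq, hφl, hφw] at h
    exact h
  have himg : F0.1.edges.image (Sym2.map φ) = F0.1.edges := by
    apply Finset.eq_of_subset_of_card_le
    · intro e he
      have hmem : e ∈ insert s(ℓ, va) F0.1.edges := hinsert ▸ Finset.mem_insert_of_mem he
      rcases Finset.mem_insert.mp hmem with rfl | h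
      · exact absurd he hims
      · exact h
    · rw [Finset.card_image_of_injOn (sym2_map_injOn φinj F0.1.edges hew)]
  have hfix := rigid F0.1 F0.2 φ φinj φv himg (fun y => φl y) w hwV
  rw [← hφw]
  exact hfix

/-- Contracting the leaf edge of the subdivision cannot give an attachment forest. -/
lemma lm_case (F0 : XForest X) (ℓ va a b : ℕ) (x0 : X)
    (hlab : F0.1.labelOf x0 = ℓ) (hlV : ℓ ∈ F0.1.verts)
    (hlO : ∀ e ∈ F0.1.edges, ℓ ∉ e)
    (hab : s(a, b) ∈ F0.1.edges)
    (hvaV : va ∈ F0.1.verts) (hva_ne_l : va ≠ ℓ)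
    (Φ : IsIso (⟨F0.1.verts, insert s(a, ℓ) (insert s(b, ℓ) (F0.1.edges.erase s(a, b))),
      F0.1.labelOf⟩ : PreForest X) (F0.1.addEdge s(ℓ, va))) : False := by
  classical
  obtain ⟨φ, φinj, φv, φe, φl⟩ := Φ
  have hew : ∀ e ∈ F0.1.edges, ∀ z ∈ e, z ∈ F0.1.verts := fun e he => (F0.2.edge_ok e he).2
  have haV : a ∈ F0.1.verts := hew _ hab a (Sym2.mem_mk_left a b)
  have hbV : b ∈ F0.1.verts := hew _ hab b (Sym2.mem_mk_right a b)
  have hanb : a ≠ b := fun h => (F0.2.edge_ok _ hab).1 (h ▸ Sym2.mk_isDiag_iff.mpr rfl)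
  have hla : ℓ ≠ a := fun h => hlO _ hab (h ▸ Sym2.mem_mk_left a b)
  have hedP : ∀ e ∈ (insert s(a, ℓ) (insert s(b, ℓ) (F0.1.edges.erase s(a, b)))),
      ∀ z ∈ e, z ∈ F0.1.verts := by
    intro e he z hz
    rcases Finset.mem_insert.mp he with rfl | he'
    · rcases Sym2.mem_iff.mp hz with rfl | rfl
      · exact haV
      · exact hlV
    · rcases Finset.mem_insert.mp he' with rfl | he''
      · rcases Sym2.mem_iff.mp hz with rfl | rfl
        · exact hbV
        · exact hlV
      · exact hew e (Finset.mem_of_mem_erase he'') z hz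
  have hφl : φ ℓ = ℓ := by
    have h := φl x0
    rw [show (F0.1.addEdge s(ℓ, va)).labelOf x0 = ℓ from hlab] at h
    have h2 : ℓ = φ (F0.1.labelOf x0) := h
    rw [hlab] at h2
    exact h2.symm
  have hcard := iso_filter_card
    (F := (⟨F0.1.verts, insert s(a, ℓ) (insert s(b, ℓ) (F0.1.edges.erase s(a, b))),
      F0.1.labelOf⟩ : PreForest X))
    (G := F0.1.addEdge s(ℓ, va)) φinj hedP φe (v := ℓ) hlV
  rw [hφl] at hcard
  have hL : (F0.1.addEdge s(ℓ, va)).edges.filter (fun e => ℓ ∈ e) = {s(ℓ, va)} := by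
    show (insert s(ℓ, va) F0.1.edges).filter (fun e => ℓ ∈ e) = {s(ℓ, va)}
    rw [Finset.filter_insert, if_pos (Sym2.mem_mk_left ℓ va),
      Finset.filter_eq_empty_iff.mpr (fun e he => hlO e he), Finset.insert_empty]
  have hR : (insert s(a, ℓ) (insert s(b, ℓ) (F0.1.edges.erase s(a, b)))).filter
      (fun e => ℓ ∈ e) = {s(a, ℓ), s(b, ℓ)} := by
    rw [Finset.filter_insert, if_pos (Sym2.mem_mk_right a ℓ),
      Finset.filter_insert, if_pos (Sym2.mem_mk_right b ℓ),
      Finset.filter_eq_empty_iff.mpr (fun e he => hlO e (Finset.mem_of_mem_erase he)), Finset.insert_empty]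
  have hcard' : ({s(ℓ, va)} : Finset (Sym2 ℕ)).card
      = ({s(a, ℓ), s(b, ℓ)} : Finset (Sym2 ℕ)).card := by
    rw [← hL, ← hR]
    exact hcard
  have h2 : ({s(a, ℓ), s(b, ℓ)} : Finset (Sym2 ℕ)).card = 2 := by
    rw [Finset.card_insert_of_notMem, Finset.card_singleton]
    intro h
    rw [Finset.mem_singleton, Sym2.eq_iff] at h
    rcases h with ⟨h1, _⟩ | ⟨h1, h2'⟩
    · exact hanb h1
    · exact hla h1.symm
  rw [Finset.card_singleton, h2] at hcard'
  exact absurd hcard' (by omega)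

/-- Contracting a tree edge of the subdivision cannot give an attachment forest. -/
lemma ee_case (F0 : XForest X) (ℓ va a b m p q : ℕ) (x0 : X)
    (hlab : F0.1.labelOf x0 = ℓ) (hlV : ℓ ∈ F0.1.verts)
    (hlO : ∀ e ∈ F0.1.edges, ℓ ∉ e)
    (hab : s(a, b) ∈ F0.1.edges) (hmV : m ∉ F0.1.verts)
    (hvaV : va ∈ F0.1.verts) (hva_ne_l : va ≠ ℓ)
    (hpq : s(p, q) ∈ F0.1.edges) (hpq_ne : s(p, q) ≠ s(a, b))
    (Φ : IsIso ((F0.1.subdivideAttach a b m ℓ).contractEdge p q) (F0.1.addEdge s(ℓ, va))) :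
    False := by
  classical
  have hew : ∀ e ∈ F0.1.edges, ∀ z ∈ e, z ∈ F0.1.verts := fun e he => (F0.2.edge_ok e he).2
  have hnd : ∀ e ∈ F0.1.edges, ¬ e.IsDiag := fun e he => (F0.2.edge_ok e he).1
  have haV : a ∈ F0.1.verts := hew _ hab a (Sym2.mem_mk_left a b)
  have hbV : b ∈ F0.1.verts := hew _ hab b (Sym2.mem_mk_right a b)
  have hpV : p ∈ F0.1.verts := hew _ hpq p (Sym2.mem_mk_left p q)
  have hqV : q ∈ F0.1.verts := hew _ hpq q (Sym2.mem_mk_right p q)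
  have hpnq : p ≠ q := fun h => (hnd _ hpq) (h ▸ Sym2.mk_isDiag_iff.mpr rfl)
  have hanb : a ≠ b := fun h => (hnd _ hab) (h ▸ Sym2.mk_isDiag_iff.mpr rfl)
  have hla : ℓ ≠ a := fun h => hlO _ hab (h ▸ Sym2.mem_mk_left a b)
  have hlb : ℓ ≠ b := fun h => hlO _ hab (h ▸ Sym2.mem_mk_right a b)
  have hlp : ℓ ≠ p := fun h => hlO _ hpq (h ▸ Sym2.mem_mk_left p q)
  have hlq : ℓ ≠ q := fun h => hlO _ hpq (h ▸ Sym2.mem_mk_right p q)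
  have hlm : ℓ ≠ m := fun h => hmV (h ▸ hlV)
  have ham : a ≠ m := fun h => hmV (h ▸ haV)
  have hbm : b ≠ m := fun h => hmV (h ▸ hbV)
  have hpm : p ≠ m := fun h => hmV (h ▸ hpV)
  have hqm : q ≠ m := fun h => hmV (h ▸ hqV)
  have hmq : m ≠ q := fun h => hqm h.symm
  set Cr : PreForest X := F0.1.subdivideAttach a b m ℓ with hCrdef
  have hCrE : Cr.edges = insert s(ℓ, m) (insert s(a, m) (insert s(b, m)
      (F0.1.edges.erase s(a, b)))) := rfl
  have hCrV : Cr.verts = insert m F0.1.verts := rfl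
  have hCrL : Cr.labelOf = F0.1.labelOf := rfl
  have hedCr : ∀ e ∈ Cr.edges, ∀ z ∈ e, z ∈ Cr.verts := by
    intro e he z hz
    rw [hCrE] at he
    rw [hCrV]
    rcases Finset.mem_insert.mp he with h | he
    · rw [h] at hz
      rcases Sym2.mem_iff.mp hz with h' | h' <;> rw [h']
      · exact Finset.mem_insert_of_mem hlV
      · exact Finset.mem_insert_self m _
    · rcases Finset.mem_insert.mp he with h | he
      · rw [h] at hz
        rcases Sym2.mem_iff.mp hz with h' | h' <;> rw [h']
        · exact Finset.mem_insert_of_mem haV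
        · exact Finset.mem_insert_self m _
      · rcases Finset.mem_insert.mp he with h | he
        · rw [h] at hz
          rcases Sym2.mem_iff.mp hz with h' | h' <;> rw [h']
          · exact Finset.mem_insert_of_mem hbV
          · exact Finset.mem_insert_self m _
        · exact Finset.mem_insert_of_mem (hew e (Finset.mem_of_mem_erase he) z hz)
  have hlmCr : ∀ y, Cr.labelOf y ∈ Cr.verts := by
    intro y
    rw [hCrL, hCrV]
    exact Finset.mem_insert_of_mem (F0.2.label_mem y)
  set Pc : PreForest X := Cr.contractEdge p q with hPcdef
  obtain ⟨φ, φinj, φv, φe, φl⟩ := Φ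
  have hpCr : p ∈ Cr.verts := by rw [hCrV]; exact Finset.mem_insert_of_mem hpV
  have hgood := contract_good hedCr hlmCr hpCr hpnq
  have hedPc : ∀ e ∈ Pc.edges, ∀ z ∈ e, z ∈ Pc.verts := fun e he => (hgood.1 e he).2
  have hmPc : m ∈ Pc.verts := by
    show m ∈ Cr.verts.erase q
    rw [hCrV]
    exact Finset.mem_erase.mpr ⟨hmq, Finset.mem_insert_self m _⟩
  have hlPc : ℓ ∈ Pc.verts := by
    show ℓ ∈ Cr.verts.erase q
    rw [hCrV]
    exact Finset.mem_erase.mpr ⟨hlq, Finset.mem_insert_of_mem hlV⟩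
  have hPcl : Pc.labelOf x0 = ℓ := by
    show (if Cr.labelOf x0 = q then p else Cr.labelOf x0) = ℓ
    rw [hCrL, hlab, if_neg hlq]
  have hφl : φ ℓ = ℓ := by
    have h := φl x0
    rw [show (F0.1.addEdge s(ℓ, va)).labelOf x0 = ℓ from hlab, hPcl] at h
    exact h.symm
  have hmap_lm : Sym2.map (fun w => if w = q then p else w) s(ℓ, m) = s(ℓ, m) := by
    rw [Sym2.map_pair_eq, if_neg hlq, if_neg hmq]
  set A' : ℕ := if a = q then p else a with hA'
  set B' : ℕ := if b = q then p else b with hB'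
  have hmap_am : Sym2.map (fun w => if w = q then p else w) s(a, m) = s(A', m) := by
    rw [Sym2.map_pair_eq, if_neg hmq]
  have hmap_bm : Sym2.map (fun w => if w = q then p else w) s(b, m) = s(B', m) := by
    rw [Sym2.map_pair_eq, if_neg hmq]
  have hA'V : A' ∈ F0.1.verts := by
    rw [hA']; by_cases h : a = q
    · rw [if_pos h]; exact hpV
    · rw [if_neg h]; exact haV
  have hB'V : B' ∈ F0.1.verts := by
    rw [hB']; by_cases h : b = q
    · rw [if_pos h]; exact hpV
    · rw [if_neg h]; exact hbV
  have hA'm : A' ≠ m := fun h => hmV (h ▸ hA'V)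
  have hB'm : B' ≠ m := fun h => hmV (h ▸ hB'V)
  have hlA' : ℓ ≠ A' := by
    rw [hA']; by_cases h : a = q
    · rw [if_pos h]; exact hlp
    · rw [if_neg h]; exact hla
  have hlB' : ℓ ≠ B' := by
    rw [hB']; by_cases h : b = q
    · rw [if_pos h]; exact hlp
    · rw [if_neg h]; exact hlb
  have hA'B' : A' ≠ B' := by
    rw [hA', hB']
    by_cases h1 : a = q <;> by_cases h2 : b = q
    · exact absurd (h1.trans h2.symm) hanb
    · rw [if_pos h1, if_neg h2]
      intro h
      apply hpq_ne
      rw [← h1, ← h, Sym2.eq_swap]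
    · rw [if_neg h1, if_pos h2]
      intro h
      apply hpq_ne
      rw [← h2, h]
    · rw [if_neg h1, if_neg h2]; exact hanb
  -- the edges of Pc containing ℓ
  have hfL : Pc.edges.filter (fun e => ℓ ∈ e) = {s(ℓ, m)} := by
    ext e
    rw [Finset.mem_filter, Finset.mem_singleton]
    constructor
    · rintro ⟨he, hle⟩
      rw [hPcdef, mem_contract_edges] at he
      obtain ⟨⟨e₀, he₀, rfl⟩, hnde⟩ := he
      obtain ⟨z, hz, hφz⟩ := Sym2.mem_map.mp hle
      have hφz' : (if z = q then p else z) = ℓ := hφz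
      have hzl : z = ℓ := by
        by_cases h : z = q
        · rw [if_pos h] at hφz'
          exact absurd hφz'.symm hlp
        · rwa [if_neg h] at hφz'
      rw [hzl] at hz
      rw [hCrE] at he₀
      have he₀' : e₀ = s(ℓ, m) := by
        rcases Finset.mem_insert.mp he₀ with rfl | he₀
        · rfl
        · rcases Finset.mem_insert.mp he₀ with rfl | he₀
          · rcases Sym2.mem_iff.mp hz with h | h
            · exact absurd h hla
            · exact absurd h hlm
          · rcases Finset.mem_insert.mp he₀ with rfl | he₀
            · rcases Sym2.mem_iff.mp hz with h | h
              · exact absurd h hlb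
              · exact absurd h hlm
            · exact absurd hz (hlO e₀ (Finset.mem_of_mem_erase he₀))
      rw [he₀', hmap_lm]
    · rintro rfl
      constructor
      · rw [hPcdef, mem_contract_edges]
        refine ⟨⟨s(ℓ, m), ?_, hmap_lm⟩, ?_⟩
        · rw [hCrE]; exact Finset.mem_insert_self _ _
        · simp [Sym2.mk_isDiag_iff, hlm]
      · exact Sym2.mem_mk_left ℓ m
  -- transfer: φ m = va
  have hfilter := iso_filter_image (F := Pc) (G := F0.1.addEdge s(ℓ, va))
    φinj hedPc φe (v := ℓ) hlPc
  rw [hφl] at hfilter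
  have hL : (F0.1.addEdge s(ℓ, va)).edges.filter (fun e => ℓ ∈ e) = {s(ℓ, va)} := by
    show (insert s(ℓ, va) F0.1.edges).filter (fun e => ℓ ∈ e) = {s(ℓ, va)}
    rw [Finset.filter_insert, if_pos (Sym2.mem_mk_left ℓ va),
      Finset.filter_eq_empty_iff.mpr (fun e he => hlO e he), Finset.insert_empty]
  rw [hL, hfL, Finset.image_singleton, Sym2.map_pair_eq, hφl] at hfilter
  have hsing : s(ℓ, va) = s(ℓ, φ m) := Finset.singleton_injective hfilter
  have hφm : φ m = va := by
    rw [Sym2.eq_iff] at hsing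
    rcases hsing with ⟨_, h2⟩ | ⟨h1, h2⟩
    · exact h2.symm
    · exact absurd h2 hva_ne_l
  by_cases hvalab : ∃ y, F0.1.labelOf y = va
  · obtain ⟨y, hy⟩ := hvalab
    have h1 := φl y
    rw [show (F0.1.addEdge s(ℓ, va)).labelOf y = va from hy] at h1
    have hPclmem : Pc.labelOf y ∈ Pc.verts := hgood.2 y
    have h2 : Pc.labelOf y = m := φinj hPclmem hmPc (h1.symm.trans hφm.symm)
    have h3 : Pc.labelOf y ∈ F0.1.verts := by
      show (if Cr.labelOf y = q then p else Cr.labelOf y) ∈ F0.1.verts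
      rw [hCrL]
      by_cases h : F0.1.labelOf y = q
      · rw [if_pos h]; exact hpV
      · rw [if_neg h]; exact F0.2.label_mem y
    rw [h2] at h3
    exact hmV h3
  · have hdeg : 2 < F0.1.degree va := F0.2.unlabeled_deg va hvaV hvalab
    have hfM : Pc.edges.filter (fun e => m ∈ e) = {s(ℓ, m), s(A', m), s(B', m)} := by
      ext e
      rw [Finset.mem_filter]
      constructor
      · rintro ⟨he, hme⟩
        rw [hPcdef, mem_contract_edges] at he
        obtain ⟨⟨e₀, he₀, rfl⟩, hnde⟩ := he
        obtain ⟨z, hz, hφz⟩ := Sym2.mem_map.mp hme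
        have hφz' : (if z = q then p else z) = m := hφz
        have hzm : z = m := by
          by_cases h : z = q
          · rw [if_pos h] at hφz'
            exact absurd hφz' hpm
          · rwa [if_neg h] at hφz'
        rw [hzm] at hz
        rw [hCrE] at he₀
        simp only [Finset.mem_insert, Finset.mem_singleton]
        rcases Finset.mem_insert.mp he₀ with rfl | he₀
        · exact Or.inl (by rw [hmap_lm])
        rcases Finset.mem_insert.mp he₀ with rfl | he₀
        · exact Or.inr (Or.inl (by rw [hmap_am]))
        rcases Finset.mem_insert.mp he₀ with rfl | he₀
        · exact Or.inr (Or.inr (by rw [hmap_bm]))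
        · exact absurd (hew e₀ (Finset.mem_of_mem_erase he₀) m hz) hmV
      · intro he
        simp only [Finset.mem_insert, Finset.mem_singleton] at he
        rcases he with rfl | rfl | rfl
        · refine ⟨?_, Sym2.mem_mk_right ℓ m⟩
          rw [hPcdef, mem_contract_edges]
          refine ⟨⟨s(ℓ, m), ?_, hmap_lm⟩, ?_⟩
          · rw [hCrE]; exact Finset.mem_insert_self _ _
          · simp [Sym2.mk_isDiag_iff, hlm]
        · refine ⟨?_, Sym2.mem_mk_right A' m⟩
          rw [hPcdef, mem_contract_edges]
          refine ⟨⟨s(a, m), ?_, hmap_am⟩, ?_⟩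
          · rw [hCrE]
            exact Finset.mem_insert_of_mem (Finset.mem_insert_self _ _)
          · simp [Sym2.mk_isDiag_iff, hA'm]
        · refine ⟨?_, Sym2.mem_mk_right B' m⟩
          rw [hPcdef, mem_contract_edges]
          refine ⟨⟨s(b, m), ?_, hmap_bm⟩, ?_⟩
          · rw [hCrE]
            exact Finset.mem_insert_of_mem (Finset.mem_insert_of_mem
              (Finset.mem_insert_self _ _))
          · simp [Sym2.mk_isDiag_iff, hB'm]
    have hcard3 : ({s(ℓ, m), s(A', m), s(B', m)} : Finset (Sym2 ℕ)).card = 3 := by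
      rw [Finset.card_insert_of_notMem, Finset.card_insert_of_notMem,
        Finset.card_singleton]
      · intro h
        rw [Finset.mem_singleton, Sym2.eq_iff] at h
        rcases h with ⟨h1, _⟩ | ⟨h1, h2⟩
        · exact hA'B' h1
        · exact hA'm h1
      · intro h
        simp only [Finset.mem_insert, Finset.mem_singleton] at h
        rcases h with h | h <;> rw [Sym2.eq_iff] at h
        · rcases h with ⟨h1, _⟩ | ⟨h1, _⟩
          · exact hlA' h1
          · exact hlm h1
        · rcases h with ⟨h1, _⟩ | ⟨h1, _⟩
          · exact hlB' h1
          · exact hlm h1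
    have hcnt := iso_filter_card (F := Pc) (G := F0.1.addEdge s(ℓ, va))
      φinj hedPc φe (v := m) hmPc
    rw [hφm, hfM] at hcnt
    rw [hcard3] at hcnt
    have hAr_filter : (F0.1.addEdge s(ℓ, va)).edges.filter (fun e => va ∈ e)
        = insert s(ℓ, va) (F0.1.edges.filter (fun e => va ∈ e)) := by
      show (insert s(ℓ, va) F0.1.edges).filter (fun e => va ∈ e) = _
      rw [Finset.filter_insert, if_pos (Sym2.mem_mk_right ℓ va)]
    have hnotm : s(ℓ, va) ∉ F0.1.edges.filter (fun e => va ∈ e) :=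
      fun h => hlO _ (Finset.mem_filter.mp h).1 (Sym2.mem_mk_left _ _)
    rw [hAr_filter, Finset.card_insert_of_notMem hnotm] at hcnt
    have hdeg' : F0.1.degree va = (F0.1.edges.filter (fun e => va ∈ e)).card := rfl
    omega

end PreForest

/-- Let `{C_i, C_j, C_k}` be a critical triplet, `C` a maximal
element of `S([n])` with `C > F_ijk`, and `A ⋗ F_ijk`.  Then `C` covers `A` iff the
edge `e(C)` is incident to the vertex `v(A)` in `T(F_ijk)`. -/
theorem covers_iff_edge_incident_vertex {n : ℕ} (T : CriticalTriplet (Fin n))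
    (C : Tuffley (Fin n)) (hCmax : IsMaxT C) (hCgt : tlt T.Fijk C)
    (A : Tuffley (Fin n)) (hA : tCovBy T.Fijk A)
    (a b va : ℕ) (hsub : T.SubdividesAt C a b) (hatt : T.AttachedAt A va) :
    tCovBy A C ↔ (va = a ∨ va = b) := by
  classical
  obtain ⟨habE', m, Cr, hmV', hCr, hCrdef⟩ := hsub
  obtain ⟨hvaT', Ar, hAr, hArdef⟩ := hatt
  have habE : s(a, b) ∈ T.FijkR.1.edges := habE'
  have hvaT : va ∈ T.FijkR.1.verts.erase T.leafv := hvaT'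
  obtain ⟨hva_ne_l, hvaV⟩ := Finset.mem_erase.mp hvaT
  set F0 := T.FijkR with hF0
  have hmV : m ∉ F0.1.verts := hmV'
  have hew : ∀ e ∈ F0.1.edges, ∀ z ∈ e, z ∈ F0.1.verts := fun e he => (F0.2.edge_ok e he).2
  have hnd : ∀ e ∈ F0.1.edges, ¬ e.IsDiag := fun e he => (F0.2.edge_ok e he).1
  have hlmem : ∀ y, F0.1.labelOf y ∈ F0.1.verts := F0.2.label_mem
  -- basic facts about the isolated labeled vertex
  have hvertseq : F0.1.verts = T.R.1.verts.erase T.w1 := by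
    rw [T.hFijkdef, T.hFjdef]; rfl
  have hlw1 : ¬ (T.leafv = T.w1) := fun h => T.h_w1_ne h.symm
  have hlV : T.leafv ∈ F0.1.verts := by
    rw [hvertseq]
    refine Finset.mem_erase.mpr ⟨hlw1, ?_⟩
    rw [← T.h_label]; exact T.R.2.label_mem T.x
  have hml : ¬ (T.midv = T.leafv) := by
    intro h
    exact (T.R.2.edge_ok _ T.h_ex).1 (Sym2.mk_isDiag_iff.mpr h.symm)
  have hmw1 : ¬ (T.midv = T.w1) := by
    intro h
    exact (T.R.2.edge_ok _ T.h_int1.1).1 (h ▸ Sym2.mk_isDiag_iff.mpr rfl)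
  have hRdeg : T.R.1.edges.filter (fun e => T.leafv ∈ e) = {s(T.leafv, T.midv)} := by
    have hcard : (T.R.1.edges.filter (fun e => T.leafv ∈ e)).card = 1 := T.h_leaf
    obtain ⟨e, he⟩ := Finset.card_eq_one.mp hcard
    have hm2 : s(T.leafv, T.midv) ∈ T.R.1.edges.filter (fun e => T.leafv ∈ e) :=
      Finset.mem_filter.mpr ⟨T.h_ex, Sym2.mem_mk_left _ _⟩
    rw [he] at hm2 ⊢
    rw [Finset.mem_singleton] at hm2
    rw [hm2]
  have hedgeseq : F0.1.edges = ((T.R.1.edges.image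
      (Sym2.map fun w => if w = T.w1 then T.midv else w)).filter
      (fun e => ¬ e.IsDiag)).erase s(T.leafv, T.midv) := by
    rw [T.hFijkdef, T.hFjdef]; rfl
  have hlO : ∀ e ∈ F0.1.edges, T.leafv ∉ e := by
    intro e he hin
    rw [hedgeseq] at he
    obtain ⟨hne_e, heF⟩ := Finset.mem_erase.mp he
    obtain ⟨heI, hnde⟩ := Finset.mem_filter.mp heF
    obtain ⟨e₀, he₀, rfl⟩ := Finset.mem_image.mp heI
    obtain ⟨z, hz, hρz⟩ := Sym2.mem_map.mp hin
    have hρz' : (if z = T.w1 then T.midv else z) = T.leafv := hρz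
    have hzl : z = T.leafv := by
      by_cases h : z = T.w1
      · rw [if_pos h] at hρz'
        exact absurd hρz' hml
      · rwa [if_neg h] at hρz'
    rw [hzl] at hz
    have hmem0 : e₀ ∈ T.R.1.edges.filter (fun e => T.leafv ∈ e) :=
      Finset.mem_filter.mpr ⟨he₀, hz⟩
    rw [hRdeg, Finset.mem_singleton] at hmem0
    apply hne_e
    rw [hmem0, Sym2.map_pair_eq, if_neg hlw1, if_neg hmw1]
  have hf0label : F0.1.labelOf T.x = T.leafv := by
    rw [T.hFijkdef, T.hFjdef]
    show (if T.R.1.labelOf T.x = T.w1 then T.midv else T.R.1.labelOf T.x) = T.leafv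
    rw [T.h_label, if_neg hlw1]
  -- facts about a, b, va, m
  have haV : a ∈ F0.1.verts := hew _ habE a (Sym2.mem_mk_left a b)
  have hbV : b ∈ F0.1.verts := hew _ habE b (Sym2.mem_mk_right a b)
  have hanb : a ≠ b := fun h => (hnd _ habE) (h ▸ Sym2.mk_isDiag_iff.mpr rfl)
  have hla : T.leafv ≠ a := fun h => hlO _ habE (h ▸ Sym2.mem_mk_left a b)
  have hlb : T.leafv ≠ b := fun h => hlO _ habE (h ▸ Sym2.mem_mk_right a b)
  have hlm' : T.leafv ≠ m := fun h => hmV (h ▸ hlV)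
  have ham : a ≠ m := fun h => hmV (h ▸ haV)
  have hbm : b ≠ m := fun h => hmV (h ▸ hbV)
  have hvam : va ≠ m := fun h => hmV (h ▸ hvaV)
  have hmE : ∀ e ∈ F0.1.edges, m ∉ e := fun e he hm'' => hmV (hew e he m hm'')
  -- counting
  have hlvaE : s(T.leafv, va) ∉ F0.1.edges := fun h => hlO _ h (Sym2.mem_mk_left _ _)
  have hcntA : TuffleyAux.cnt A = F0.1.edges.card + 1 := by
    rw [← hAr, TuffleyAux.cnt_mk, hArdef]
    show (insert s(T.leafv, va) F0.1.edges).card = _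
    rw [Finset.card_insert_of_notMem hlvaE]
  have hcntC : TuffleyAux.cnt C = F0.1.edges.card + 2 := by
    rw [← hCr, TuffleyAux.cnt_mk, hCrdef]
    show (insert s(T.leafv, m) (insert s(a, m) (insert s(b, m)
      (F0.1.edges.erase s(a, b))))).card = _
    have h1 : s(b, m) ∉ F0.1.edges.erase s(a, b) :=
      fun h => hmE _ (Finset.mem_of_mem_erase h) (Sym2.mem_mk_right b m)
    have h2 : s(a, m) ∉ insert s(b, m) (F0.1.edges.erase s(a, b)) := by
      intro h
      rcases Finset.mem_insert.mp h with h | h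
      · rw [Sym2.eq_iff] at h
        rcases h with ⟨h1', _⟩ | ⟨h1', _⟩
        · exact hanb h1'
        · exact ham h1'
      · exact hmE _ (Finset.mem_of_mem_erase h) (Sym2.mem_mk_right a m)
    have h3 : s(T.leafv, m) ∉ insert s(a, m) (insert s(b, m)
        (F0.1.edges.erase s(a, b))) := by
      intro h
      rcases Finset.mem_insert.mp h with h | h
      · rw [Sym2.eq_iff] at h
        rcases h with ⟨h1', _⟩ | ⟨h1', _⟩
        · exact hla h1'
        · exact hlm' h1'
      · rcases Finset.mem_insert.mp h with h | h
        · rw [Sym2.eq_iff] at h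
          rcases h with ⟨h1', _⟩ | ⟨h1', _⟩
          · exact hlb h1'
          · exact hlm' h1'
        · exact hmE _ (Finset.mem_of_mem_erase h) (Sym2.mem_mk_right _ m)
    rw [Finset.card_insert_of_notMem h3, Finset.card_insert_of_notMem h2,
      Finset.card_insert_of_notMem h1, Finset.card_erase_of_mem habE]
    have hpos : 0 < F0.1.edges.card := Finset.card_pos.mpr ⟨_, habE⟩
    omega
  have hvntA : TuffleyAux.vnt A = F0.1.verts.card := by
    rw [← hAr, TuffleyAux.vnt_mk, hArdef]
    rfl
  have hvntC : TuffleyAux.vnt C = F0.1.verts.card + 1 := by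
    rw [← hCr, TuffleyAux.vnt_mk, hCrdef]
    show (insert m F0.1.verts).card = _
    rw [Finset.card_insert_of_notMem hmV]
  constructor
  · -- covering implies incidence
    intro hcov
    obtain ⟨⟨⟨Fr, Gr, hFr, hGr, H, hchain, hiso⟩, hnCA⟩, hmin⟩ := hcov
    have hcA2 : TuffleyAux.cnt A = Fr.1.edges.card := by rw [← hFr, TuffleyAux.cnt_mk]
    have hcC2 : TuffleyAux.cnt C = Gr.1.edges.card := by rw [← hGr, TuffleyAux.cnt_mk]
    have hvA2 : TuffleyAux.vnt A = Fr.1.verts.card := by rw [← hFr, TuffleyAux.vnt_mk]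
    have hvC2 : TuffleyAux.vnt C = Gr.1.verts.card := by rw [← hGr, TuffleyAux.vnt_mk]
    rcases Relation.ReflTransGen.cases_head hchain with heq | ⟨K, hstep, hrest⟩
    · exfalso
      have hGF : PreForest.IsIso Gr.1 Fr.1 := heq ▸ hiso
      have hmk : mkT Gr = mkT Fr := TuffleyAux.sound_mk hGF
      have hac : C = A := by rw [← hGr, ← hFr, hmk]
      rw [hac] at hcntC
      omega
    rcases Relation.ReflTransGen.cases_head hrest with heq2 | ⟨K2, hstep2, hrest2⟩
    swap
    · exfalso
      have c1 : Fr.1.edges.card ≤ H.edges.card := TuffleyAux.iso_edges_card_le hiso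
      have c2 : H.edges.card ≤ K2.edges.card := TuffleyAux.rtg_edges_le hrest2
      have c3 : K2.edges.card < K.edges.card := TuffleyAux.step_edges_lt hstep2
      have c4 : K.edges.card < Gr.1.edges.card := TuffleyAux.step_edges_lt hstep
      omega
    · rw [← heq2] at hiso
      cases hstep with
      | delete e hsafe =>
        exfalso
        obtain ⟨f, finj, hfv, _, _⟩ := hiso
        have hcard : Fr.1.verts.card = Gr.1.verts.card := by
          rw [← hfv, Finset.card_image_of_injOn finj]
          rfl
        omega
      | contract u v hmemuv hneuv =>
        have ψ := TuffleyAux.exact_iso (show mkT Cr = mkT Gr from hCr.trans hGr.symm)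
        obtain ⟨g, ginj, gv, ge, gl⟩ := ψ
        have hmem' : s(u, v) ∈ Cr.1.edges.image (Sym2.map g) := by rw [ge]; exact hmemuv
        obtain ⟨e₀, he₀, hmape⟩ := Finset.mem_image.mp hmem'
        revert he₀ hmape
        induction e₀ using Sym2.inductionOn with | _ p q =>
        intro he₀ hmape
        rw [Sym2.map_pair_eq] at hmape
        have hedCr : ∀ e ∈ Cr.1.edges, ∀ z ∈ e, z ∈ Cr.1.verts :=
          fun e he => (Cr.2.edge_ok e he).2
        have hndCr : ∀ e ∈ Cr.1.edges, ¬ e.IsDiag := fun e he => (Cr.2.edge_ok e he).1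
        have hlmCr : ∀ y, Cr.1.labelOf y ∈ Cr.1.verts := Cr.2.label_mem
        have hpV' : p ∈ Cr.1.verts := hedCr _ he₀ p (Sym2.mem_mk_left p q)
        have hqV' : q ∈ Cr.1.verts := hedCr _ he₀ q (Sym2.mem_mk_right p q)
        have hpq_ne : p ≠ q := fun h => (hndCr _ he₀) (h ▸ Sym2.mk_isDiag_iff.mpr rfl)
        have hiso2 : ∃ p' q', s(p', q') ∈ Cr.1.edges ∧
            PreForest.IsIso (Cr.1.contractEdge p' q') Fr.1 := by
          rw [Sym2.eq_iff] at hmape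
          rcases hmape with ⟨h1, h2⟩ | ⟨h1, h2⟩
          · refine ⟨p, q, he₀, ?_⟩
            have hcc := PreForest.contract_iso ginj gv ge gl hedCr hlmCr hpV' hqV' hpq_ne
            rw [h1, h2] at hcc
            exact PreForest.iso_trans hcc hiso
          · refine ⟨q, p, by rwa [Sym2.eq_swap], ?_⟩
            have hcc := PreForest.contract_iso ginj gv ge gl hedCr hlmCr hqV' hpV'
              (Ne.symm hpq_ne)
            rw [h1, h2] at hcc
            exact PreForest.iso_trans hcc hiso
        obtain ⟨p', q', hpq'mem, hisoC⟩ := hiso2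
        have hFrAr := TuffleyAux.exact_iso (show mkT Fr = mkT Ar from hFr.trans hAr.symm)
        have Φ : PreForest.IsIso (Cr.1.contractEdge p' q') Ar.1 :=
          PreForest.iso_trans hisoC hFrAr
        have hCrE : Cr.1.edges = insert s(T.leafv, m) (insert s(a, m) (insert s(b, m)
            (F0.1.edges.erase s(a, b)))) := by rw [hCrdef]; rfl
        have hCrV : Cr.1.verts = insert m F0.1.verts := by rw [hCrdef]; rfl
        have hlCr : T.leafv ∈ Cr.1.verts := by rw [hCrV]; exact Finset.mem_insert_of_mem hlV
        have hmCr : m ∈ Cr.1.verts := by rw [hCrV]; exact Finset.mem_insert_self _ _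
        have haCr : a ∈ Cr.1.verts := by rw [hCrV]; exact Finset.mem_insert_of_mem haV
        have hbCr : b ∈ Cr.1.verts := by rw [hCrV]; exact Finset.mem_insert_of_mem hbV
        rw [hCrE] at hpq'mem
        rcases Finset.mem_insert.mp hpq'mem with hcase | hpq'mem
        · -- contracted the leaf edge: impossible
          exfalso
          have Φ' : PreForest.IsIso (Cr.1.contractEdge T.leafv m) Ar.1 := by
            rw [Sym2.eq_iff] at hcase
            rcases hcase with ⟨h1, h2⟩ | ⟨h1, h2⟩
            · rwa [h1, h2] at Φ
            · have hswap := PreForest.contract_swap hedCr hlCr hmCr hlm'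
              rw [h1, h2] at Φ
              exact PreForest.iso_trans hswap Φ
          rw [hCrdef, PreForest.contract_subdivide_l F0.1 a b m T.leafv hew hnd hlmem
            hmV habE hla hlb hlm'] at Φ'
          exact PreForest.lm_case F0 T.leafv va a b T.x hf0label hlV hlO habE hvaV
            hva_ne_l (by rwa [hArdef] at Φ')
        rcases Finset.mem_insert.mp hpq'mem with hcase | hpq'mem
        · -- contracted s(a, m): va = a
          left
          have Φ' : PreForest.IsIso (Cr.1.contractEdge a m) Ar.1 := by
            rw [Sym2.eq_iff] at hcase
            rcases hcase with ⟨h1, h2⟩ | ⟨h1, h2⟩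
            · rwa [h1, h2] at Φ
            · have hswap := PreForest.contract_swap hedCr haCr hmCr ham
              rw [h1, h2] at Φ
              exact PreForest.iso_trans hswap Φ
          rw [hCrdef, PreForest.contract_subdivide F0.1 a b m T.leafv hew hnd hlmem
            hmV habE hla hlb hlm'] at Φ'
          exact PreForest.attach_case F0 T.leafv a va T.x hf0label hlV hlO haV hvaV
            hva_ne_l (by rwa [hArdef] at Φ')
        rcases Finset.mem_insert.mp hpq'mem with hcase | hpq'mem
        · -- contracted s(b, m): va = b
          right
          have Φ' : PreForest.IsIso (Cr.1.contractEdge b m) Ar.1 := by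
            rw [Sym2.eq_iff] at hcase
            rcases hcase with ⟨h1, h2⟩ | ⟨h1, h2⟩
            · rwa [h1, h2] at Φ
            · have hswap := PreForest.contract_swap hedCr hbCr hmCr hbm
              rw [h1, h2] at Φ
              exact PreForest.iso_trans hswap Φ
          rw [hCrdef, PreForest.subdivide_comm F0.1 a b m T.leafv,
            PreForest.contract_subdivide F0.1 b a m T.leafv hew hnd hlmem hmV
              (by rw [Sym2.eq_swap]; exact habE) hlb hla hlm'] at Φ'
          exact PreForest.attach_case F0 T.leafv b va T.x hf0label hlV hlO hbV hvaV
            hva_ne_l (by rwa [hArdef] at Φ')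
        · -- contracted a tree edge: impossible
          exfalso
          have hpqE : s(p', q') ∈ F0.1.edges := Finset.mem_of_mem_erase hpq'mem
          have hpq_ne_ab : s(p', q') ≠ s(a, b) := (Finset.mem_erase.mp hpq'mem).1
          refine PreForest.ee_case F0 T.leafv va a b m p' q' T.x hf0label hlV hlO habE
            hmV hvaV hva_ne_l hpqE hpq_ne_ab ?_
          rw [hCrdef] at Φ
          rwa [hArdef] at Φ
  · -- incidence implies covering
    intro hvaab
    have hmain : ∀ w, va = w → s(w, m) ∈ Cr.1.edges →
        Cr.1.contractEdge w m = Ar.1 → tCovBy A C := by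
      intro w hvw hwmem heqq
      have hwm : w ≠ m := fun h => hvam (hvw.trans h)
      have hstep : PreForest.Step Cr.1 (Cr.1.contractEdge w m) :=
        PreForest.Step.contract w m hwmem hwm
      have hle : tle A C := ⟨Ar, Cr, hAr, hCr, Cr.1.contractEdge w m,
        Relation.ReflTransGen.single hstep, PreForest.iso_of_eq heqq⟩
      have hnCA : ¬ tle C A := by
        intro h
        have := TuffleyAux.tle_cnt_le h
        omega
      refine ⟨⟨hle, hnCA⟩, ?_⟩
      intro c h1 h2
      have g1 := TuffleyAux.tlt_cnt_lt h1
      have g2 := TuffleyAux.tlt_cnt_lt h2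
      omega
    rcases hvaab with h | h
    · apply hmain a h
      · rw [hCrdef]
        exact Finset.mem_insert_of_mem (Finset.mem_insert_self _ _)
      · rw [hCrdef, hArdef, h]
        exact PreForest.contract_subdivide F0.1 a b m T.leafv hew hnd hlmem hmV habE
          hla hlb hlm'
    · apply hmain b h
      · rw [hCrdef]
        exact Finset.mem_insert_of_mem (Finset.mem_insert_of_mem
          (Finset.mem_insert_self _ _))
      · rw [hCrdef, hArdef, h, PreForest.subdivide_comm F0.1 a b m T.leafv]
        exact PreForest.contract_subdivide F0.1 b a m T.leafv hew hnd hlmem hmV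
          (by rw [Sym2.eq_swap]; exact habE) hlb hla hlm'
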